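/- arXiv:1010.2372 — 7 statements merged into one kernel-verified Lean document; each statement's English description precedes it below -/
import Mathlib

section
/- Let 0 < ε < 1 and let Ω_ε = {λ ∈ ℂ : |Re λ| ≤ ε|λ| and Im λ ≤ -1 + ε}. Define coefficients Γ_k(λ) by the recurrence Γ_0(λ) = 1 and Γ_k(λ) = (ρ(ρ-1)/(k(k - iλ))) · Σ_{j=0}^{k-1} (k - j) Γ_j(λ) for k ≥ 1, where ρ = (n-1)/2 with n ≥ 2 a fixed integer. Then there exist ν ≥ 1 and C > 0 such that for every k ∈ ℕ* and every λ ∈ ℂ \ Ω_ε, one has |Γ_k(λ)| ≤ C · k^ν · (1 + |λ|)^{-1}. -/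
/-!
For `λ ∉ Ω_ε` one has `‖k - iλ‖ ≥ (ε/3)(k + ‖λ‖)`, so with `c = |ρ(ρ - 1)|` and `A = ε/3` the
coefficient of the recurrence has norm at most `c / (k·A·(k + ‖λ‖))`. Strong induction then gives
`‖Γ_k‖ ≤ C k^ν / (1 + ‖λ‖)`: the term `j = 0` of the sum contributes at most `c / (A(1 + ‖λ‖))`,
and, since `∑_{j<k} j^ν ≤ k^(ν+1)/(ν+1)`, the terms `j ≥ 1` contribute at most
`(c / (A(ν+1))) · C k^ν / (1 + ‖λ‖)`. Both are at most half of the target once `2c ≤ A·C` and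
`2c ≤ A(ν+1)`.
-/

open Complex Finset

def omegaRegion (ε : ℝ) : Set ℂ :=
  {z | |z.re| ≤ ε * ‖z‖ ∧ z.im ≤ -1 + ε}

theorem le_norm_ofReal_sub_I_mul_of_notMem_omegaRegion {ε : ℝ} (hε0 : 0 < ε) (hε1 : ε ≤ 1)
    {t : ℝ} (ht : 1 ≤ t) {z : ℂ} (hz : z ∉ omegaRegion ε) :
    ε / 3 * (t + ‖z‖) ≤ ‖(t : ℂ) - I * z‖ := by
  have hre : |t + z.im| ≤ ‖(t : ℂ) - I * z‖ := by
    simpa using abs_re_le_norm ((t : ℂ) - I * z)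
  have him : |z.re| ≤ ‖(t : ℂ) - I * z‖ := by
    simpa using abs_im_le_norm ((t : ℂ) - I * z)
  have hz_le : ‖z‖ ≤ |z.re| + |z.im| := norm_le_abs_re_add_abs_im z
  have hre_le := le_abs_self (t + z.im)
  have hre_ge := neg_abs_le (t + z.im)
  simp only [omegaRegion, Set.mem_ofPred_eq, not_and_or, not_le] at hz
  rcases hz with h | h
  · -- interpolate between `ε‖z‖ < |Re z|` and `t - ‖z‖ ≤ t + Im z`
    nlinarith [abs_im_le_norm z, neg_abs_le z.im]
  · rcases le_or_gt 0 z.im with hy | hy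
    · rw [abs_of_nonneg hy] at hz_le
      nlinarith
    · -- `|Im z| < 1`, so `‖z‖ ≤ ‖t - iz‖ + 1`, while `‖t - iz‖ ≥ t - 1 + ε ≥ εt`
      rw [abs_of_neg hy] at hz_le
      nlinarith

theorem norm_mul_sum_range_sub_mul_le (q : ℂ) (b : ℕ → ℂ) (k : ℕ) :
    ‖q * ∑ j ∈ range k, ((k : ℂ) - j) * b j‖ ≤ ‖q‖ * ∑ j ∈ range k, ((k : ℝ) - j) * ‖b j‖ := by
  rw [norm_mul]
  gcongr
  refine (norm_sum_le _ _).trans (sum_le_sum fun j hj => ?_)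
  have hjk : j ≤ k := (mem_range.mp hj).le
  rw [norm_mul, ← Nat.cast_sub hjk, norm_natCast, Nat.cast_sub hjk]

theorem sum_range_pow_le_div (m k : ℕ) :
    ∑ j ∈ range k, (j : ℝ) ^ m ≤ (k : ℝ) ^ (m + 1) / (m + 1) := by
  have hmono : MonotoneOn (fun x : ℝ => x ^ m) (Set.Icc 0 (0 + k)) :=
    fun x hx y _ hxy => pow_le_pow_left₀ hx.1 hxy m
  simpa [integral_pow] using hmono.sum_le_integral

theorem sum_range_sub_mul_le {a : ℕ → ℝ} {B : ℝ} {m k : ℕ} (hB : 0 ≤ B) (ha0 : a 0 ≤ 1)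
    (ha : ∀ j, 1 ≤ j → j < k → a j ≤ B * j ^ m) :
    ∑ j ∈ range k, ((k : ℝ) - j) * a j ≤ k * (1 + B * k ^ (m + 1) / (m + 1)) := by
  have hterm : ∀ j ∈ range k,
      ((k : ℝ) - j) * a j ≤ (if j = 0 then (k : ℝ) else 0) + k * (B * j ^ m) := by
    intro j hj
    have hjk : (j : ℝ) < k := by exact_mod_cast mem_range.mp hj
    rcases Nat.eq_zero_or_pos j with rfl | hj0
    · have : 0 ≤ (k : ℝ) * (B * (0 : ℝ) ^ m) := by positivity
      simp only [Nat.cast_zero, sub_zero, if_true]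
      nlinarith
    · rw [if_neg hj0.ne', zero_add]
      calc ((k : ℝ) - j) * a j ≤ ((k : ℝ) - j) * (B * j ^ m) :=
            mul_le_mul_of_nonneg_left (ha j hj0 (mem_range.mp hj)) (by linarith)
        _ ≤ k * (B * j ^ m) := by gcongr; linarith
  calc ∑ j ∈ range k, ((k : ℝ) - j) * a j
      ≤ ∑ j ∈ range k, ((if j = 0 then (k : ℝ) else 0) + k * (B * j ^ m)) := sum_le_sum hterm
    _ = k + k * B * ∑ j ∈ range k, (j : ℝ) ^ m := by
        rw [sum_add_distrib, sum_ite_eq', ← mul_sum, ← mul_sum, mul_assoc]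
        rcases k.eq_zero_or_pos with rfl | hk
        · simp
        · rw [if_pos (mem_range.mpr hk)]
    _ ≤ k + k * B * ((k : ℝ) ^ (m + 1) / (m + 1)) := by gcongr; exact sum_range_pow_le_div m k
    _ = k * (1 + B * k ^ (m + 1) / (m + 1)) := by ring

theorem le_mul_pow_div_of_recursive_le {a : ℕ → ℝ} {c A r C : ℝ} {m : ℕ} (hA : 0 < A)
    (hc : 0 ≤ c) (hr : 0 ≤ r) (hcC : 2 * c ≤ A * C) (hcm : 2 * c ≤ A * (m + 1))
    (ha0 : a 0 ≤ 1)
    (hrec : ∀ k, 1 ≤ k → a k ≤ c / (k * (A * (k + r))) * ∑ j ∈ range k, ((k : ℝ) - j) * a j) :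
    ∀ k, 1 ≤ k → a k ≤ C * k ^ m / (1 + r) := by
  have hC : 0 ≤ C := by nlinarith
  intro k
  induction k using Nat.strong_induction_on with
  | _ k ih =>
    intro hk
    have hk1 : (1 : ℝ) ≤ k := by exact_mod_cast hk
    set B := C / (1 + r)
    have hsum := sum_range_sub_mul_le (m := m) (div_nonneg hC (by linarith : (0 : ℝ) ≤ 1 + r))
      ha0 (fun j hj hjk => by simpa [mul_div_right_comm] using ih j hjk hj)
    have hkr : 0 < A * (k + r) := by positivity
    have hfirst : c / (A * (k + r)) ≤ C / 2 * k ^ m / (1 + r) := by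
      have hkm : (1 : ℝ) ≤ k ^ m := one_le_pow₀ hk1
      rw [div_le_div_iff₀ hkr (by positivity)]
      nlinarith [mul_le_mul_of_nonneg_left hkm hC]
    have hsecond : c / (A * (k + r)) * B * k ^ (m + 1) / (m + 1) ≤ C / 2 * k ^ m / (1 + r) := by
      have hratio : c * k / (A * (k + r) * (m + 1)) ≤ 1 / 2 := by
        rw [div_le_iff₀ (by positivity)]
        nlinarith [mul_le_mul_of_nonneg_left (by linarith : (k : ℝ) ≤ k + r) hA.le]
      calc c / (A * (k + r)) * B * k ^ (m + 1) / (m + 1)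
          = c * k / (A * (k + r) * (m + 1)) * (C * k ^ m / (1 + r)) := by
            simp only [B]; field_simp; ring
        _ ≤ 1 / 2 * (C * k ^ m / (1 + r)) := by gcongr
        _ = C / 2 * k ^ m / (1 + r) := by ring
    calc a k ≤ c / (k * (A * (k + r))) * (k * (1 + B * k ^ (m + 1) / (m + 1))) :=
          (hrec k hk).trans (mul_le_mul_of_nonneg_left hsum (by positivity))
      _ = c / (A * (k + r)) + c / (A * (k + r)) * B * k ^ (m + 1) / (m + 1) := by
          field_simp
      _ ≤ C / 2 * k ^ m / (1 + r) + C / 2 * k ^ m / (1 + r) := add_le_add hfirst hsecond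
      _ = C * k ^ m / (1 + r) := by ring

theorem gamma_coeff_bound_general (ε : ℝ) (hε0 : 0 < ε) (hε1 : ε < 1)
    (ρ : ℝ)
    (G : ℕ → ℂ → ℂ)
    (hG0 : ∀ lam : ℂ, G 0 lam = 1)
    (hGrec : ∀ k : ℕ, 1 ≤ k → ∀ lam : ℂ,
      G k lam = ((ρ : ℂ) * ((ρ : ℂ) - 1) / ((k : ℂ) * ((k : ℂ) - Complex.I * lam))) *
        ∑ j ∈ Finset.range k, ((k : ℂ) - (j : ℂ)) * G j lam) :
    ∃ ν : ℝ, 1 ≤ ν ∧ ∃ C : ℝ, 0 < C ∧ ∀ k : ℕ, 1 ≤ k → ∀ lam : ℂ,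
      ¬ (|lam.re| ≤ ε * ‖lam‖ ∧ lam.im ≤ -1 + ε) →
      ‖G k lam‖ ≤ C * (k : ℝ) ^ ν * (1 + ‖lam‖)⁻¹ := by
  set c := ‖(ρ : ℂ) * ((ρ : ℂ) - 1)‖
  set A := ε / 3
  have hA : 0 < A := by positivity
  set C := 2 * c / A + 1
  have hcC : 2 * c ≤ A * C := by
    simp only [C]; rw [mul_add, mul_div_cancel₀ _ hA.ne']; linarith
  have hCm : C ≤ ⌈C⌉₊ := Nat.le_ceil C
  refine ⟨⌈C⌉₊, ?_, C, by positivity, fun k hk lam hlam => ?_⟩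
  · exact_mod_cast Nat.one_le_ceil_iff.mpr (by positivity)
  have hrec : ∀ k, 1 ≤ k → ‖G k lam‖ ≤
      c / (k * (A * (k + ‖lam‖))) * ∑ j ∈ range k, ((k : ℝ) - j) * ‖G j lam‖ := by
    intro k hk
    have hN := le_norm_ofReal_sub_I_mul_of_notMem_omegaRegion hε0 hε1.le
      (by exact_mod_cast hk : (1 : ℝ) ≤ k) hlam
    rw [ofReal_natCast] at hN
    rw [hGrec k hk lam]
    refine (norm_mul_sum_range_sub_mul_le _ _ k).trans
      (mul_le_mul_of_nonneg_right ?_ (sum_nonneg fun j hj => ?_))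
    · rw [norm_div, norm_mul (k : ℂ), norm_natCast]
      gcongr
    · have : (j : ℝ) ≤ k := by exact_mod_cast (mem_range.mp hj).le
      exact mul_nonneg (by linarith) (norm_nonneg _)
  have hbound := le_mul_pow_div_of_recursive_le (m := ⌈C⌉₊) hA (norm_nonneg _) (norm_nonneg lam)
    hcC (hcC.trans (by gcongr; linarith)) (by simp [hG0]) hrec k hk
  rwa [Real.rpow_natCast, ← div_eq_mul_inv]

/-- Bound on the Harish–Chandra coefficients `Γ_k(λ)` outside the region `Ω_ε`. -/
theorem gamma_coeff_bound (n : ℕ) (hn : 2 ≤ n) (ε : ℝ) (hε0 : 0 < ε) (hε1 : ε < 1)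
    (ρ : ℝ) (hρ : ρ = ((n : ℝ) - 1) / 2)
    (G : ℕ → ℂ → ℂ)
    (hG0 : ∀ lam : ℂ, G 0 lam = 1)
    (hGrec : ∀ k : ℕ, 1 ≤ k → ∀ lam : ℂ,
      G k lam = ((ρ : ℂ) * ((ρ : ℂ) - 1) / ((k : ℂ) * ((k : ℂ) - Complex.I * lam))) *
        ∑ j ∈ Finset.range k, ((k : ℂ) - (j : ℂ)) * G j lam) :
    ∃ ν : ℝ, 1 ≤ ν ∧ ∃ C : ℝ, 0 < C ∧ ∀ k : ℕ, 1 ≤ k → ∀ lam : ℂ,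
      ¬ (|lam.re| ≤ ε * ‖lam‖ ∧ lam.im ≤ -1 + ε) →
      ‖G k lam‖ ≤ C * (k : ℝ) ^ ν * (1 + ‖lam‖)⁻¹ :=
  gamma_coeff_bound_general ε hε0 hε1 ρ G hG0 hGrec
end

section
/- Let a : ℝ → ℂ be a compactly supported homogeneous symbol of order d > -1, i.e. a is smooth on ℝ \ {0}, has bounded support, and satisfies sup_{λ≠0} |λ|^{ℓ-d} |∂^ℓ a(λ)| < ∞ for every ℓ ∈ ℕ. Let N be the smallest integer > d + 1. Then the Fourier-type integral k(x) = ∫_0^∞ a(λ) e^{iλx} dλ satisfies: there exists C ≥ 0 such that for all x ≠ 0, |k(x)| ≤ C |x|^{-d-1} Σ_{ℓ=0}^{N} sup_{λ≠0} (1+|λ|)^{ℓ-d} |∂^ℓ a(λ)|. -/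
open Complex MeasureTheory Set

lemma aux_exp_hasDerivAt (c : ℂ) (t : ℝ) :
    HasDerivAt (fun s : ℝ => Complex.exp (c * s)) (c * Complex.exp (c * t)) t := by
  have h : HasDerivAt (fun z : ℂ => Complex.exp (c * z)) (c * Complex.exp (c * t)) (t : ℂ) := by
    simpa [mul_comm] using ((hasDerivAt_id (t : ℂ)).const_mul c).cexp
  exact h.comp_ofReal

lemma aux_norm_exp (x t : ℝ) : ‖Complex.exp (Complex.I * x * t)‖ = 1 := by
  rw [Complex.norm_exp]
  have : (Complex.I * x * t : ℂ).re = 0 := by simp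
  rw [this, Real.exp_zero]

lemma aux_ibp (x : ℝ) (hx : x ≠ 0) {u u' : ℝ → ℂ} {r R : ℝ} (hrR : r ≤ R)
    (hu : ∀ t ∈ Set.Icc r R, HasDerivAt u (u' t) t)
    (hu'c : ContinuousOn u' (Set.Icc r R))
    (huR : u R = 0) :
    ∫ t in r..R, u t * Complex.exp (Complex.I * x * t)
      = -(u r * (Complex.exp (Complex.I * x * r) / (Complex.I * x)))
        - (Complex.I * x)⁻¹ * ∫ t in r..R, u' t * Complex.exp (Complex.I * x * t) := by
  set c : ℂ := Complex.I * x with hc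
  have hc0 : c ≠ 0 := mul_ne_zero Complex.I_ne_zero (by exact_mod_cast hx)
  have huIcc : Set.uIcc r R = Set.Icc r R := Set.uIcc_of_le hrR
  have hv : ∀ t : ℝ, HasDerivAt (fun s : ℝ => Complex.exp (c * s) / c) (Complex.exp (c * t)) t := by
    intro t
    have h := (aux_exp_hasDerivAt c t).div_const c
    simpa [mul_div_assoc, mul_div_cancel_left₀ _ hc0] using h
  have hu'int : IntervalIntegrable u' volume r R := by
    apply ContinuousOn.intervalIntegrable
    rwa [huIcc]
  have hvint : IntervalIntegrable (fun s : ℝ => Complex.exp (c * s)) volume r R := by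
    apply Continuous.intervalIntegrable
    exact Complex.continuous_exp.comp (continuous_const.mul Complex.continuous_ofReal)
  have key := intervalIntegral.integral_mul_deriv_eq_deriv_mul
    (fun t ht => hu t (huIcc ▸ ht)) (fun t _ => hv t) hu'int hvint
  rw [huR] at key
  rw [key]
  have : ∫ t in r..R, u' t * (Complex.exp (c * t) / c)
      = c⁻¹ * ∫ t in r..R, u' t * Complex.exp (c * t) := by
    rw [← intervalIntegral.integral_const_mul]
    congr 1; ext t; field_simp
  rw [this]; ring

lemma aux_contDiffOn {a : ℝ → ℂ} (ha : ContDiffOn ℝ (⊤ : ℕ∞) a {(0:ℝ)}ᶜ) (ℓ : ℕ) :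
    ContDiffOn ℝ (⊤ : ℕ∞) (iteratedDeriv ℓ a) {(0:ℝ)}ᶜ := by
  induction ℓ with
  | zero => simpa [iteratedDeriv_zero] using ha
  | succ n ih =>
    rw [iteratedDeriv_succ]
    exact ih.deriv_of_isOpen isOpen_compl_singleton (by simp)

lemma aux_hasDerivAt {a : ℝ → ℂ} (ha : ContDiffOn ℝ (⊤ : ℕ∞) a {(0:ℝ)}ᶜ) (ℓ : ℕ) {t : ℝ}
    (ht : t ≠ 0) :
    HasDerivAt (iteratedDeriv ℓ a) (iteratedDeriv (ℓ + 1) a t) t := by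
  have h := (aux_contDiffOn ha ℓ).contDiffAt
    (isOpen_compl_singleton.mem_nhds (by simpa using ht))
  have hdiff : DifferentiableAt ℝ (iteratedDeriv ℓ a) t := h.differentiableAt (by simp)
  rw [iteratedDeriv_succ]
  exact hdiff.hasDerivAt

lemma aux_vanish {a : ℝ → ℂ} {R₀ : ℝ}
    (hs : Function.support a ⊆ Metric.closedBall 0 R₀) (ℓ : ℕ) {t : ℝ} (ht : R₀ < t) :
    iteratedDeriv ℓ a t = 0 := by
  have hev : a =ᶠ[nhds t] (fun _ => (0 : ℂ)) := by
    filter_upwards [Ioi_mem_nhds ht] with s hs'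
    by_contra h
    have := hs (Function.mem_support.mpr h)
    simp only [Metric.mem_closedBall, Real.dist_eq, sub_zero] at this
    have : s ≤ R₀ := (abs_le.mp this).2
    linarith [mem_Ioi.mp hs']
  rw [Filter.EventuallyEq.iteratedDeriv_eq ℓ hev]
  induction ℓ with
  | zero => simp [iteratedDeriv_zero]
  | succ n ih => simpa [iteratedDeriv_succ', deriv_const'] using ih

lemma aux_main_ind {a : ℝ → ℂ} (ha : ContDiffOn ℝ (⊤ : ℕ∞) a {(0:ℝ)}ᶜ)
    {R₀ : ℝ} (hs : Function.support a ⊆ Metric.closedBall 0 R₀)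
    (d : ℝ) (N : ℕ) (hN : d + 1 < N)
    (M' : ℕ → ℝ) (hM'₀ : ∀ ℓ, 0 ≤ M' ℓ)
    (hbd : ∀ ℓ : ℕ, ∀ lam : ℝ, 0 < lam → ‖iteratedDeriv ℓ a lam‖ ≤ M' ℓ * lam ^ (d - (ℓ:ℝ)))
    (x : ℝ) (hx : x ≠ 0) {r R : ℝ} (hr : 0 < r) (hrx : r = |x|⁻¹) (hrR : r ≤ R)
    (hR : R₀ < R) :
    ∀ m : ℕ, ∀ ℓ : ℕ, ℓ + m = N →
      ‖∫ t in r..R, iteratedDeriv ℓ a t * Complex.exp (Complex.I * x * t)‖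
        ≤ (M' N / ((N:ℝ) - d - 1) + ∑ j ∈ Finset.Ico ℓ N, M' j) * r ^ (d - (ℓ:ℝ) + 1) := by
  have hIcc_sub : Set.Icc r R ⊆ {(0:ℝ)}ᶜ := fun t ht => by
    simp only [mem_compl_iff, mem_singleton_iff]
    exact ne_of_gt (lt_of_lt_of_le hr ht.1)
  have hxpos : (0:ℝ) < |x| := abs_pos.mpr hx
  intro m
  induction m with
  | zero =>
    intro ℓ hℓ
    simp only [Nat.add_zero] at hℓ
    subst hℓ
    rw [Finset.Ico_self, Finset.sum_empty, add_zero]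
    set e : ℝ := d - (ℓ:ℝ) + 1 with he_def
    have hp : (0:ℝ) < (ℓ:ℝ) - d - 1 := by
      have : d + 1 < (ℓ:ℝ) := hN
      linarith
    have hRpos : (0:ℝ) < R := lt_of_lt_of_le hr hrR
    have hgint : IntervalIntegrable (fun t : ℝ => M' ℓ * t ^ (d - (ℓ:ℝ))) volume r R := by
      apply ContinuousOn.intervalIntegrable
      intro t ht
      have ht0 : t ≠ 0 := ne_of_gt (lt_of_lt_of_le hr ((Set.uIcc_of_le hrR ▸ ht).1))
      exact (continuousAt_const.mul
        (Real.continuousAt_rpow_const t _ (Or.inl ht0))).continuousWithinAt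
    have h1 : ‖∫ t in r..R, iteratedDeriv ℓ a t * Complex.exp (Complex.I * x * t)‖
        ≤ |∫ t in r..R, M' ℓ * t ^ (d - (ℓ:ℝ))| := by
      apply intervalIntegral.norm_integral_le_abs_of_norm_le _ hgint
      filter_upwards [MeasureTheory.ae_restrict_mem measurableSet_uIoc] with t ht
      rw [Set.uIoc_of_le hrR] at ht
      rw [norm_mul, aux_norm_exp, mul_one]
      simpa using hbd ℓ t (lt_of_le_of_lt hr.le ht.1 |>.trans_le le_rfl)
    have h2 : ∫ t in r..R, M' ℓ * t ^ (d - (ℓ:ℝ))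
        = M' ℓ * ((r ^ e - R ^ e) / ((ℓ:ℝ) - d - 1)) := by
      rw [intervalIntegral.integral_const_mul, integral_rpow]
      · congr 1
        rw [div_eq_div_iff (by linarith) (by linarith)]
        ring
      · right
        refine ⟨by intro hcon; linarith, ?_⟩
        rw [Set.uIcc_of_le hrR]
        intro hcon
        exact absurd hcon.1 (not_le.mpr hr)
    have hmono : R ^ e ≤ r ^ e :=
      Real.rpow_le_rpow_of_nonpos hr hrR (by simp only [he_def]; linarith)
    refine h1.trans ?_
    rw [h2, _root_.abs_of_nonneg (mul_nonneg (hM'₀ ℓ)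
      (div_nonneg (by linarith) hp.le))]
    have hRe : (0:ℝ) ≤ R ^ e := Real.rpow_nonneg hRpos.le e
    have hdiv : (r ^ e - R ^ e) / ((ℓ:ℝ) - d - 1) ≤ r ^ e / ((ℓ:ℝ) - d - 1) :=
      by gcongr <;> linarith
    calc M' ℓ * ((r ^ e - R ^ e) / ((ℓ:ℝ) - d - 1))
        ≤ M' ℓ * (r ^ e / ((ℓ:ℝ) - d - 1)) := mul_le_mul_of_nonneg_left hdiv (hM'₀ ℓ)
      _ = M' ℓ / ((ℓ:ℝ) - d - 1) * r ^ e := by ring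
  | succ m ih =>
    intro ℓ hℓ
    have hℓN : ℓ < N := by omega
    have hsucc : (ℓ + 1) + m = N := by omega
    have hcont : ContinuousOn (iteratedDeriv (ℓ+1) a) (Set.Icc r R) :=
      ((aux_contDiffOn ha (ℓ+1)).continuousOn).mono hIcc_sub
    have hder : ∀ t ∈ Set.Icc r R, HasDerivAt (iteratedDeriv ℓ a) (iteratedDeriv (ℓ+1) a t) t :=
      fun t ht => aux_hasDerivAt ha ℓ (ne_of_gt (lt_of_lt_of_le hr ht.1))
    have hzero : iteratedDeriv ℓ a R = 0 := aux_vanish hs ℓ hR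
    rw [aux_ibp x hx hrR hder hcont hzero]
    have hIH := ih (ℓ+1) hsucc
    have hnorm_c : ‖(Complex.I * (x:ℂ))‖ = |x| := by
      rw [norm_mul, Complex.norm_I, one_mul, Complex.norm_real, Real.norm_eq_abs]
    have hrnn : (0:ℝ) ≤ r := hr.le
    calc ‖-(iteratedDeriv ℓ a r * (Complex.exp (Complex.I * x * r) / (Complex.I * x)))
          - (Complex.I * x)⁻¹ * ∫ t in r..R, iteratedDeriv (ℓ+1) a t * Complex.exp (Complex.I * x * t)‖
        ≤ ‖iteratedDeriv ℓ a r‖ * (1 / |x|)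
          + |x|⁻¹ * ‖∫ t in r..R, iteratedDeriv (ℓ+1) a t * Complex.exp (Complex.I * x * t)‖ := by
          refine (norm_sub_le _ _).trans ?_
          rw [norm_neg, norm_mul, norm_mul, norm_inv, norm_div, aux_norm_exp, hnorm_c, one_div]
      _ ≤ M' ℓ * r ^ (d - (ℓ:ℝ)) * r
          + r * ((M' N / ((N:ℝ) - d - 1) + ∑ j ∈ Finset.Ico (ℓ+1) N, M' j)
              * r ^ (d - (((ℓ+1):ℕ):ℝ) + 1)) := by
          rw [one_div, ← hrx]
          gcongr
          exact hbd ℓ r hr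
      _ = (M' N / ((N:ℝ) - d - 1) + ∑ j ∈ Finset.Ico ℓ N, M' j) * r ^ (d - (ℓ:ℝ) + 1) := by
          rw [Finset.sum_eq_sum_Ico_succ_bot hℓN]
          push_cast
          rw [show d - ((ℓ:ℝ) + 1) + 1 = d - (ℓ:ℝ) from by ring,
            show d - (ℓ:ℝ) + 1 = (d - (ℓ:ℝ)) + 1 from by ring,
            Real.rpow_add hr, Real.rpow_one]
          ring


/-- Lemma A.1: the Fourier transform of a compactly supported homogeneous symbol
of order `d > -1` decays like `|x|^{-d-1}`, with a constant controlled by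
`Σ_{ℓ=0}^N sup_{λ≠0} (1+|λ|)^{ℓ-d} |∂^ℓ a(λ)|`, where `N` is the smallest integer `> d+1`. -/
theorem fourier_homogeneous_symbol_decay (d : ℝ) (hd : -1 < d) (N : ℕ)
    (hN : d + 1 < (N : ℝ)) (hN' : (N : ℝ) - 1 ≤ d + 1)
    (a : ℝ → ℂ) (ha : ContDiffOn ℝ (⊤ : ℕ∞) a {(0 : ℝ)}ᶜ)
    (hsupp : Bornology.IsBounded (Function.support a))
    (hHom : ∀ ℓ : ℕ, ∃ M' : ℝ, ∀ lam : ℝ, lam ≠ 0 →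
      |lam| ^ ((ℓ : ℝ) - d) * ‖iteratedDeriv ℓ a lam‖ ≤ M')
    (M : ℕ → ℝ)
    (hM : ∀ ℓ : ℕ, ∀ lam : ℝ, lam ≠ 0 →
      (1 + |lam|) ^ ((ℓ : ℝ) - d) * ‖iteratedDeriv ℓ a lam‖ ≤ M ℓ) :
    ∃ C : ℝ, 0 ≤ C ∧ ∀ x : ℝ, x ≠ 0 →
      ‖∫ lam in Set.Ioi (0 : ℝ), a lam * Complex.exp (Complex.I * lam * x)‖ ≤
        C * |x| ^ (-d - 1) * ∑ ℓ ∈ Finset.range (N + 1), M ℓ := by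
  classical
  -- nonnegativity of M
  have hM0 : ∀ ℓ, 0 ≤ M ℓ := fun ℓ =>
    le_trans (mul_nonneg (Real.rpow_nonneg (by norm_num) _) (norm_nonneg _))
      (hM ℓ 1 one_ne_zero)
  set S := ∑ ℓ ∈ Finset.range (N + 1), M ℓ with hS_def
  have hS0 : 0 ≤ S := Finset.sum_nonneg fun ℓ _ => hM0 ℓ
  rcases eq_or_lt_of_le hS0 with hS | hS
  · -- S = 0 : then a vanishes away from 0 and the integral is 0
    refine ⟨0, le_refl 0, fun x hx => ?_⟩
    have hMall : ∀ ℓ ∈ Finset.range (N + 1), M ℓ = 0 :=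
      (Finset.sum_eq_zero_iff_of_nonneg (fun ℓ _ => hM0 ℓ)).mp hS.symm
    have hM00 : M 0 = 0 := hMall 0 (Finset.mem_range.mpr (Nat.succ_pos N))
    have haz : ∀ lam : ℝ, lam ≠ 0 → a lam = 0 := by
      intro lam hlam
      have h := hM 0 lam hlam
      rw [hM00] at h
      have hpow : (0:ℝ) < (1 + |lam|) ^ ((0:ℕ) - d : ℝ) :=
        Real.rpow_pos_of_pos (by positivity) _
      have : ‖a lam‖ ≤ 0 := by
        rw [iteratedDeriv_zero] at h
        nlinarith [norm_nonneg (a lam)]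
      simpa using le_antisymm this (norm_nonneg _)
    have : ∫ lam in Set.Ioi (0:ℝ), a lam * Complex.exp (Complex.I * lam * x) = 0 := by
      apply setIntegral_eq_zero_of_forall_eq_zero
      intro t ht
      rw [haz t (ne_of_gt (mem_Ioi.mp ht)), zero_mul]
    rw [this, norm_zero]
    simp
  · -- main case
    choose M' hM' using hHom
    have hM'₀ : ∀ ℓ, 0 ≤ M' ℓ := fun ℓ =>
      le_trans (mul_nonneg (Real.rpow_nonneg (abs_nonneg _) _) (norm_nonneg _))
        (hM' ℓ 1 one_ne_zero)
    have hbd : ∀ ℓ : ℕ, ∀ lam : ℝ, 0 < lam →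
        ‖iteratedDeriv ℓ a lam‖ ≤ M' ℓ * lam ^ (d - (ℓ:ℝ)) := by
      intro ℓ lam hlam
      have h := hM' ℓ lam (ne_of_gt hlam)
      rw [abs_of_pos hlam] at h
      have key : lam ^ ((ℓ:ℝ) - d) * lam ^ (d - (ℓ:ℝ)) = 1 := by
        rw [← Real.rpow_add hlam]; norm_num
      have hmul := mul_le_mul_of_nonneg_right h (Real.rpow_nonneg hlam.le (d - (ℓ:ℝ)))
      calc ‖iteratedDeriv ℓ a lam‖
          = lam ^ ((ℓ:ℝ) - d) * ‖iteratedDeriv ℓ a lam‖ * lam ^ (d - (ℓ:ℝ)) := by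
            rw [mul_comm (lam ^ ((ℓ:ℝ) - d)) _, mul_assoc, key, mul_one]
        _ ≤ M' ℓ * lam ^ (d - (ℓ:ℝ)) := hmul
    obtain ⟨R₀, hR₀⟩ := hsupp.subset_closedBall 0
    -- the uniform constant
    set C' : ℝ := M' 0 / (d + 1) + (M' N / ((N:ℝ) - d - 1) + ∑ j ∈ Finset.range N, M' j)
      with hC'_def
    have hd1 : (0:ℝ) < d + 1 := by linarith
    have hNd : (0:ℝ) < (N:ℝ) - d - 1 := by linarith
    have hC'0 : 0 ≤ C' := by
      have h1 : 0 ≤ ∑ j ∈ Finset.range N, M' j := Finset.sum_nonneg fun j _ => hM'₀ j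
      have h2 : 0 ≤ M' 0 / (d + 1) := div_nonneg (hM'₀ 0) hd1.le
      have h3 : 0 ≤ M' N / ((N:ℝ) - d - 1) := div_nonneg (hM'₀ N) hNd.le
      rw [hC'_def]
      linarith
    refine ⟨C' / S, div_nonneg hC'0 hS0, fun x hx => ?_⟩
    have hxpos : (0:ℝ) < |x| := abs_pos.mpr hx
    set r : ℝ := |x|⁻¹ with hr_def
    have hr : 0 < r := inv_pos.mpr hxpos
    set R : ℝ := max (R₀ + 1) r with hR_def
    have hrR : r ≤ R := le_max_right _ _
    have hRR₀ : R₀ < R := lt_of_lt_of_le (by linarith) (le_max_left _ _)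
    have hRpos : 0 < R := lt_of_lt_of_le hr hrR
    -- rewrite the phase
    have hphase : ∀ t : ℝ, (Complex.I * t * x : ℂ) = Complex.I * x * t := fun t => by ring
    simp only [hphase]
    set G : ℝ → ℂ := fun t => a t * Complex.exp (Complex.I * x * t) with hG_def
    have hGz : ∀ t : ℝ, R₀ < t → G t = 0 := by
      intro t ht
      have : a t = 0 := by
        have h0 := aux_vanish hR₀ 0 ht
        rwa [iteratedDeriv_zero] at h0
      simp [hG_def, this]
    have hGbound : ∀ t : ℝ, 0 < t → ‖G t‖ ≤ M' 0 * t ^ d := by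
      intro t ht
      have h := hbd 0 t ht
      rw [iteratedDeriv_zero] at h
      show ‖a t * Complex.exp (Complex.I * x * t)‖ ≤ M' 0 * t ^ d
      rw [norm_mul, aux_norm_exp, mul_one]
      simpa using h
    have hGcont : ContinuousOn G {(0:ℝ)}ᶜ := by
      apply ContinuousOn.mul ha.continuousOn
      exact (Complex.continuous_exp.comp (continuous_const.mul
        Complex.continuous_ofReal)).continuousOn
    -- integrability of G on any Ioc 0 b with 0 < b
    have hGint : ∀ b : ℝ, 0 < b → IntegrableOn G (Set.Ioc 0 b) := by
      intro b hb
      have hmeas : AEStronglyMeasurable G (volume.restrict (Set.Ioc (0:ℝ) b)) := by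
        apply (hGcont.mono ?_).aestronglyMeasurable measurableSet_Ioc
        intro t ht
        exact ne_of_gt ht.1
      have hbint : IntegrableOn (fun t : ℝ => M' 0 * t ^ d) (Set.Ioc 0 b) := by
        have h1 : IntervalIntegrable (fun t : ℝ => t ^ d) volume 0 b :=
          intervalIntegral.intervalIntegrable_rpow' hd
        rw [intervalIntegrable_iff_integrableOn_Ioc_of_le hb.le] at h1
        exact h1.const_mul _
      apply hbint.mono' hmeas
      filter_upwards [MeasureTheory.ae_restrict_mem measurableSet_Ioc] with t ht
      exact hGbound t ht.1
    -- split the integral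
    have hsplit : ∫ t in Set.Ioi (0:ℝ), G t
        = (∫ t in Set.Ioc (0:ℝ) r, G t) + ∫ t in r..R, G t := by
      have e1 : Set.Ioi (0:ℝ) = Set.Ioc 0 R ∪ Set.Ioi R := (Set.Ioc_union_Ioi_eq_Ioi hRpos.le).symm
      have hzIoi : Set.EqOn G 0 (Set.Ioi R) := fun t ht => hGz t (lt_trans hRR₀ ht)
      rw [e1, setIntegral_union (Set.Ioc_disjoint_Ioi le_rfl) measurableSet_Ioi
        (hGint R hRpos)
        ((integrableOn_congr_fun hzIoi measurableSet_Ioi).mpr (integrableOn_zero))]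
      rw [setIntegral_eq_zero_of_forall_eq_zero (show ∀ t ∈ Set.Ioi R, G t = 0 from fun t ht => hGz t (lt_trans hRR₀ ht)), add_zero]
      rw [← Set.Ioc_union_Ioc_eq_Ioc hr.le hrR,
        setIntegral_union (Set.Ioc_disjoint_Ioc_of_le le_rfl) measurableSet_Ioc
        ((hGint R hRpos).mono_set (Set.Ioc_subset_Ioc_right hrR))
        ((hGint R hRpos).mono_set (Set.Ioc_subset_Ioc_left hr.le)),
        intervalIntegral.integral_of_le hrR]
    have hpart1 : ‖∫ t in Set.Ioc (0:ℝ) r, G t‖ ≤ M' 0 / (d + 1) * r ^ (d + 1) := by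
      have hb : ∀ᵐ t ∂(volume.restrict (Set.Ioc (0:ℝ) r)), ‖G t‖ ≤ M' 0 * t ^ d := by
        filter_upwards [MeasureTheory.ae_restrict_mem measurableSet_Ioc] with t ht
        exact hGbound t ht.1
      have hbint : Integrable (fun t : ℝ => M' 0 * t ^ d)
          (volume.restrict (Set.Ioc (0:ℝ) r)) := by
        have h1 : IntervalIntegrable (fun t : ℝ => t ^ d) volume 0 r :=
          intervalIntegral.intervalIntegrable_rpow' hd
        rw [intervalIntegrable_iff_integrableOn_Ioc_of_le hr.le] at h1
        exact h1.const_mul _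
      refine (MeasureTheory.norm_integral_le_of_norm_le hbint hb).trans ?_
      have heval : ∫ t in Set.Ioc (0:ℝ) r, M' 0 * t ^ d = M' 0 * (r ^ (d+1) / (d+1)) := by
        rw [← intervalIntegral.integral_of_le hr.le, intervalIntegral.integral_const_mul,
          integral_rpow (Or.inl hd), Real.zero_rpow (by linarith : d + 1 ≠ 0), sub_zero]
      rw [heval]
      exact le_of_eq (by ring)
    have hpart2 := aux_main_ind ha hR₀ d N hN M' hM'₀ hbd x hx hr rfl hrR hRR₀ N 0 (by omega)
    rw [iteratedDeriv_zero] at hpart2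
    have hexp0 : d - ((0:ℕ):ℝ) + 1 = d + 1 := by norm_num
    rw [hexp0, ← Finset.range_eq_Ico] at hpart2
    have hfinal : ‖∫ t in Set.Ioi (0:ℝ), G t‖ ≤ C' * r ^ (d + 1) := by
      rw [hsplit]
      refine (norm_add_le _ _).trans ?_
      calc ‖∫ t in Set.Ioc (0:ℝ) r, G t‖ + ‖∫ t in r..R, G t‖
          ≤ M' 0 / (d + 1) * r ^ (d + 1)
            + (M' N / ((N:ℝ) - d - 1) + ∑ j ∈ Finset.range N, M' j) * r ^ (d + 1) :=
            add_le_add hpart1 hpart2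
        _ = C' * r ^ (d + 1) := by rw [hC'_def]; ring
    have hrpow : r ^ (d + 1) = |x| ^ (-d - 1) := by
      rw [hr_def, Real.inv_rpow (abs_nonneg x), ← Real.rpow_neg (abs_nonneg x)]
      congr 1
      ring
    refine hfinal.trans (le_of_eq ?_)
    rw [hrpow]
    field_simp
end

section
/- Let a : ℝ → ℂ be smooth with M_0 = sup_λ (1+|λ|)|a(λ)| < ∞ and M_1 = sup_λ (1+|λ|)^2 |a'(λ)| < ∞ (a symbol of order d = -1). Then there exists an absolute constant C such that for every x with 0 < |x| < 1/2, the integral k(x) = ∫_ℝ a(λ) e^{iλx} dλ satisfies |k(x)| ≤ C (log(1/|x|)) (M_0 + M_1). -/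
open Complex MeasureTheory Filter Set

set_option maxHeartbeats 1000000 in
/-- Lemma A.2(ii), case `d = -1`: logarithmic blow-up at the origin of the Fourier
transform of a symbol of order `-1`.  The integral `∫ a(λ) e^{iλx} dλ` is understood
as the limit of the truncated integrals over `[-R, R]`. -/
theorem fourier_symbol_order_neg_one_log_bound :
    ∃ C : ℝ, 0 ≤ C ∧ ∀ (a : ℝ → ℂ), ContDiff ℝ (⊤ : ℕ∞) a → ∀ M₀ M₁ : ℝ,
      (∀ lam : ℝ, (1 + |lam|) * ‖a lam‖ ≤ M₀) →
      (∀ lam : ℝ, (1 + |lam|) ^ 2 * ‖deriv a lam‖ ≤ M₁) →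
      ∀ x : ℝ, 0 < |x| → |x| < 1 / 2 →
        ∃ k : ℂ,
          Tendsto (fun R : ℝ =>
              ∫ lam in Set.Ioc (-R) R, a lam * Complex.exp (Complex.I * lam * x))
            atTop (nhds k) ∧
          ‖k‖ ≤ C * Real.log (1 / |x|) * (M₀ + M₁) := by
  refine ⟨100, by norm_num, ?_⟩
  intro a ha M₀ M₁ hM₀ hM₁ x hxpos hxhalf
  have hx0 : x ≠ 0 := by simpa [abs_pos] using hxpos
  set c : ℂ := Complex.I * x with hcdef
  have hc : c ≠ 0 := mul_ne_zero Complex.I_ne_zero (Complex.ofReal_ne_zero.mpr hx0)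
  have hcnorm : ‖c‖ = |x| := by
    simp [hcdef]
  set E : ℝ → ℂ := fun t => Complex.exp (t * c) with hEdef
  set g : ℝ → ℂ := fun t => a t * E t with hgdef
  set v : ℝ → ℂ := fun t => E t / c with hvdef
  set w : ℝ → ℂ := fun t => deriv a t * v t with hwdef
  set L : ℝ := 1 / |x| with hLdef
  have hL2 : 2 < L := by
    rw [hLdef]
    rw [lt_div_iff₀ hxpos]
    linarith
  have hLpos : 0 < L := by linarith
  -- basic norms
  have hEnorm : ∀ t : ℝ, ‖E t‖ = 1 := by
    intro t
    simp [hEdef, hcdef, Complex.norm_exp, Complex.mul_re]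
  have hvnorm : ∀ t : ℝ, ‖v t‖ = |x|⁻¹ := by
    intro t
    rw [hvdef]
    rw [norm_div, hEnorm, hcnorm, one_div]
  -- nonnegativity of M₀, M₁
  have hM₀0 : 0 ≤ M₀ := le_trans (by positivity) (hM₀ 0)
  have hM₁0 : 0 ≤ M₁ := le_trans (by positivity) (hM₁ 0)
  have hanorm : ∀ t : ℝ, ‖a t‖ ≤ M₀ / (1 + |t|) := by
    intro t
    rw [le_div_iff₀ (by positivity)]
    calc ‖a t‖ * (1 + |t|) = (1 + |t|) * ‖a t‖ := by ring
    _ ≤ M₀ := hM₀ t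
  have hdnorm : ∀ t : ℝ, ‖deriv a t‖ ≤ M₁ / (1 + |t|) ^ 2 := by
    intro t
    rw [le_div_iff₀ (by positivity)]
    calc ‖deriv a t‖ * (1 + |t|) ^ 2 = (1 + |t|) ^ 2 * ‖deriv a t‖ := by ring
    _ ≤ M₁ := hM₁ t
  -- continuity
  have hconta : Continuous a := ha.continuous
  have hconta' : Continuous (deriv a) := ha.continuous_deriv (by simp)
  have hcontE : Continuous E := by
    exact Complex.continuous_exp.comp (by continuity)
  have hcontg : Continuous g := hconta.mul hcontE
  have hcontv : Continuous v := hcontE.div_const c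
  have hcontw : Continuous w := hconta'.mul hcontv
  -- derivatives
  have haderiv : ∀ t : ℝ, HasDerivAt a (deriv a t) t :=
    fun t => ((ha.differentiable (by simp)) t).hasDerivAt
  have hEder : ∀ t : ℝ, HasDerivAt E (c * E t) t := by
    intro t
    have h1 : HasDerivAt (fun s : ℝ => (s : ℂ) * c) c t := by
      simpa using (Complex.ofRealCLM.hasDerivAt (x := t)).mul_const c
    simpa [hEdef, mul_comm] using h1.cexp
  have hvder : ∀ t : ℝ, HasDerivAt v (E t) t := by
    intro t
    have := (hEder t).div_const c
    simpa [hvdef, mul_div_cancel_left₀ _ hc] using this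
  -- integrability of w
  have hw : Integrable w := by
    refine Integrable.mono' ((integrable_inv_one_add_sq).const_mul (M₁ * |x|⁻¹))
      hcontw.aestronglyMeasurable (Filter.Eventually.of_forall fun t => ?_)
    rw [hwdef]
    rw [norm_mul, hvnorm]
    have h1 : ‖deriv a t‖ ≤ M₁ * (1 + t ^ 2)⁻¹ := by
      have h2 : (1 + t ^ 2) ≤ (1 + |t|) ^ 2 := by nlinarith [abs_nonneg t, _root_.sq_abs t]
      have := hdnorm t
      rw [div_eq_mul_inv] at this
      calc ‖deriv a t‖ ≤ M₁ * ((1 + |t|) ^ 2)⁻¹ := this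
      _ ≤ M₁ * (1 + t ^ 2)⁻¹ :=
        mul_le_mul_of_nonneg_left (inv_anti₀ (by positivity) h2) hM₁0
    calc ‖deriv a t‖ * |x|⁻¹ ≤ (M₁ * (1 + t ^ 2)⁻¹) * |x|⁻¹ := by gcongr
    _ = M₁ * |x|⁻¹ * (1 + t ^ 2)⁻¹ := by ring
  -- integration by parts
  have hibp : ∀ P Q : ℝ, (∫ t in P..Q, g t) =
      a Q * v Q - a P * v P - ∫ t in P..Q, w t := by
    intro P Q
    exact intervalIntegral.integral_mul_deriv_eq_deriv_mul
      (fun t _ => haderiv t) (fun t _ => hvder t)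
      (hconta'.intervalIntegrable _ _) (hcontE.intervalIntegrable _ _)
  -- boundary terms tend to zero
  have htend0 : Tendsto (fun R : ℝ => M₀ * |x|⁻¹ * (1 + |R|)⁻¹) atTop (nhds 0) := by
    have h1 : Tendsto (fun R : ℝ => (1 + |R|)⁻¹) atTop (nhds 0) := by
      apply Filter.Tendsto.comp tendsto_inv_atTop_zero
      exact tendsto_atTop_add_const_left _ 1 tendsto_abs_atTop_atTop
    simpa using h1.const_mul (M₀ * |x|⁻¹)
  have hbdnorm : ∀ t : ℝ, ‖a t * v t‖ ≤ M₀ * |x|⁻¹ * (1 + |t|)⁻¹ := by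
    intro t
    rw [norm_mul, hvnorm]
    have := hanorm t
    rw [div_eq_mul_inv] at this
    calc ‖a t‖ * |x|⁻¹ ≤ M₀ * (1 + |t|)⁻¹ * |x|⁻¹ := by gcongr
    _ = M₀ * |x|⁻¹ * (1 + |t|)⁻¹ := by ring
  have hbd : Tendsto (fun R : ℝ => a R * v R) atTop (nhds 0) :=
    squeeze_zero_norm (fun R => hbdnorm R) htend0
  have hbd' : Tendsto (fun R : ℝ => a (-R) * v (-R)) atTop (nhds 0) := by
    apply squeeze_zero_norm (fun R => hbdnorm (-R))
    simpa [abs_neg] using htend0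
  -- tail integrals
  set Tp : ℂ := ∫ t in Ioi L, w t with hTpdef
  set Tm : ℂ := ∫ t in Iic (-L), w t with hTmdef
  have hplus : Tendsto (fun R : ℝ => ∫ t in L..R, g t) atTop
      (nhds (0 - a L * v L - Tp)) := by
    simp_rw [hibp L]
    refine Tendsto.sub (hbd.sub tendsto_const_nhds) ?_
    exact MeasureTheory.intervalIntegral_tendsto_integral_Ioi L hw.integrableOn tendsto_id
  have hminus : Tendsto (fun R : ℝ => ∫ t in (-R)..(-L), g t) atTop
      (nhds (a (-L) * v (-L) - 0 - Tm)) := by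
    have h := fun R : ℝ => hibp (-R) (-L)
    simp_rw [h]
    refine Tendsto.sub (tendsto_const_nhds.sub hbd') ?_
    exact MeasureTheory.intervalIntegral_tendsto_integral_Iic (-L) hw.integrableOn
      tendsto_neg_atTop_atBot
  set I₀ : ℂ := ∫ t in (-L)..L, g t with hI₀def
  set k : ℂ := I₀ + (0 - a L * v L - Tp) + (a (-L) * v (-L) - 0 - Tm) with hkdef
  refine ⟨k, ?_, ?_⟩
  · -- Tendsto
    have hEeq : ∀ lam : ℝ, Complex.I * lam * x = (lam : ℂ) * c := by
      intro lam; rw [hcdef]; ring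
    have hfun : (fun R : ℝ => ∫ lam in Set.Ioc (-R) R,
        a lam * Complex.exp (Complex.I * lam * x)) = fun R : ℝ => ∫ lam in Set.Ioc (-R) R, g lam := by
      funext R
      apply setIntegral_congr_fun measurableSet_Ioc
      intro t _
      show a t * Complex.exp (Complex.I * t * x) = a t * E t
      rw [hEeq t]
    rw [hfun]
    have hG : Tendsto (fun R : ℝ => I₀ + (∫ t in L..R, g t) + (∫ t in (-R)..(-L), g t))
        atTop (nhds k) := (tendsto_const_nhds.add hplus).add hminus
    refine hG.congr' ?_
    filter_upwards [eventually_ge_atTop L] with R hR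
    have hii : ∀ P Q : ℝ, IntervalIntegrable g volume P Q := fun P Q =>
      hcontg.intervalIntegrable P Q
    have h1 : (∫ t in (-R)..(-L), g t) + (∫ t in (-L)..R, g t) = ∫ t in (-R)..R, g t :=
      intervalIntegral.integral_add_adjacent_intervals (hii _ _) (hii _ _)
    have h2 : (∫ t in (-L)..L, g t) + (∫ t in L..R, g t) = ∫ t in (-L)..R, g t :=
      intervalIntegral.integral_add_adjacent_intervals (hii _ _) (hii _ _)
    have h3 : (∫ lam in Set.Ioc (-R) R, g lam) = ∫ t in (-R)..R, g t :=
      (intervalIntegral.integral_of_le (by linarith)).symm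
    rw [hI₀def, h3, ← h1, ← h2]
    ring
  · -- Norm bound
    have hxL : |x|⁻¹ = L := by rw [hLdef, one_div]
    have hbL : ‖a L * v L‖ ≤ M₀ := by
      refine (hbdnorm L).trans ?_
      rw [hxL, abs_of_pos hLpos, mul_assoc, ← div_eq_mul_inv]
      exact mul_le_of_le_one_right hM₀0 ((div_le_one (by positivity)).mpr (by linarith))
    have hbL' : ‖a (-L) * v (-L)‖ ≤ M₀ := by
      refine (hbdnorm (-L)).trans ?_
      rw [hxL, abs_neg, abs_of_pos hLpos, mul_assoc, ← div_eq_mul_inv]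
      exact mul_le_of_le_one_right hM₀0 ((div_le_one (by positivity)).mpr (by linarith))
    -- tail bounds
    have hrint : IntegrableOn (fun t : ℝ => (M₁ * |x|⁻¹) * t ^ (-2 : ℝ)) (Ioi L) :=
      (integrableOn_Ioi_rpow_of_lt (by norm_num) hLpos).const_mul _
    have hrval : ∫ t in Ioi L, (M₁ * |x|⁻¹) * t ^ (-2 : ℝ) = M₁ := by
      rw [MeasureTheory.integral_const_mul, integral_Ioi_rpow_of_lt (by norm_num) hLpos]
      norm_num [Real.rpow_neg_one]
      rw [hLdef]
      field_simp
    have hder2 : ∀ t : ℝ, t ≠ 0 → ‖deriv a t‖ ≤ M₁ * (t ^ 2)⁻¹ := by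
      intro t ht
      have htpos : (0:ℝ) < t ^ 2 :=
        lt_of_le_of_ne (sq_nonneg t) (Ne.symm (pow_ne_zero 2 ht))
      have h2 : t ^ 2 ≤ (1 + |t|) ^ 2 := by nlinarith [abs_nonneg t, _root_.sq_abs t]
      have h3 := hdnorm t
      rw [div_eq_mul_inv] at h3
      exact h3.trans (mul_le_mul_of_nonneg_left (inv_anti₀ htpos h2) hM₁0)
    have hwle : ∀ s : ℝ, L < s → ‖deriv a s * v s‖ ≤ (M₁ * |x|⁻¹) * s ^ (-2 : ℝ) := by
      intro s hs
      have hs0 : 0 < s := lt_trans hLpos hs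
      rw [norm_mul, hvnorm, Real.rpow_neg hs0.le, Real.rpow_two]
      calc ‖deriv a s‖ * |x|⁻¹ ≤ M₁ * (s ^ 2)⁻¹ * |x|⁻¹ := by
            gcongr
            exact hder2 s hs0.ne'
      _ = M₁ * |x|⁻¹ * (s ^ 2)⁻¹ := by ring
    have hTp : ‖Tp‖ ≤ M₁ := by
      rw [hTpdef]
      calc ‖∫ t in Ioi L, w t‖ ≤ ∫ t in Ioi L, ‖w t‖ := norm_integral_le_integral_norm _
      _ ≤ ∫ t in Ioi L, (M₁ * |x|⁻¹) * t ^ (-2 : ℝ) := by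
          refine setIntegral_mono_on hw.norm.integrableOn hrint measurableSet_Ioi ?_
          intro s hs
          exact hwle s hs
      _ = M₁ := hrval
    have hTm : ‖Tm‖ ≤ M₁ := by
      rw [hTmdef]
      have hcomp : ∫ t in Iic (-L), ‖w t‖ = ∫ s in Ioi L, ‖w (-s)‖ :=
        (integral_comp_neg_Ioi L _).symm
      calc ‖∫ t in Iic (-L), w t‖ ≤ ∫ t in Iic (-L), ‖w t‖ := norm_integral_le_integral_norm _
      _ = ∫ s in Ioi L, ‖w (-s)‖ := hcomp
      _ ≤ ∫ s in Ioi L, (M₁ * |x|⁻¹) * s ^ (-2 : ℝ) := by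
          refine setIntegral_mono_on (hw.norm.comp_neg).integrableOn hrint measurableSet_Ioi ?_
          intro s hs
          have hs0 : 0 < s := lt_trans hLpos hs
          show ‖deriv a (-s) * v (-s)‖ ≤ _
          rw [norm_mul, hvnorm, Real.rpow_neg hs0.le, Real.rpow_two]
          calc ‖deriv a (-s)‖ * |x|⁻¹ ≤ M₁ * (s ^ 2)⁻¹ * |x|⁻¹ := by
                gcongr
                have := hder2 (-s) (neg_ne_zero.mpr hs0.ne')
                rwa [neg_sq] at this
          _ = M₁ * |x|⁻¹ * (s ^ 2)⁻¹ := by ring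
      _ = M₁ := hrval
    -- low-frequency bound
    have hI₀ : ‖I₀‖ ≤ 4 * M₀ * Real.log L := by
      have hφcont : Continuous (fun t : ℝ => M₀ * (1 + |t|)⁻¹) := by
        apply continuous_const.mul
        apply Continuous.inv₀ (continuous_const.add (_root_.continuous_abs : Continuous fun t : ℝ => |t|))
        intro t; exact (by positivity : (0:ℝ) < 1 + |t|).ne'
      have hbound : ‖I₀‖ ≤ |∫ t in (-L)..L, M₀ * (1 + |t|)⁻¹| := by
        rw [hI₀def]
        refine intervalIntegral.norm_integral_le_abs_of_norm_le ?_ (hφcont.intervalIntegrable _ _)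
        refine Filter.Eventually.of_forall fun t => ?_
        show ‖a t * E t‖ ≤ _
        rw [norm_mul, hEnorm, mul_one]
        have h := hanorm t
        rw [div_eq_mul_inv] at h
        exact h
      have hval0 : ∫ t in (0:ℝ)..L, M₀ * (1 + |t|)⁻¹ = M₀ * Real.log (1 + L) := by
        have hcongr : ∫ t in (0:ℝ)..L, M₀ * (1 + |t|)⁻¹ = ∫ t in (0:ℝ)..L, M₀ * (1 + t)⁻¹ := by
          apply intervalIntegral.integral_congr
          intro t ht
          rw [Set.uIcc_of_le hLpos.le] at ht
          show M₀ * (1 + |t|)⁻¹ = M₀ * (1 + t)⁻¹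
          rw [_root_.abs_of_nonneg ht.1]
        rw [hcongr, intervalIntegral.integral_const_mul]
        have hF : ∀ t ∈ Set.uIcc (0:ℝ) L, HasDerivAt (fun s => Real.log (1 + s)) (1 + t)⁻¹ t := by
          intro t ht
          rw [Set.uIcc_of_le hLpos.le] at ht
          have h1 : (0:ℝ) < 1 + t := by linarith [ht.1]
          have h2 := (Real.hasDerivAt_log h1.ne').comp t ((hasDerivAt_id t).const_add 1)
          simpa [Function.comp_def] using h2
        have hint : IntervalIntegrable (fun t : ℝ => (1 + t)⁻¹) volume 0 L := by
          apply ContinuousOn.intervalIntegrable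
          apply ContinuousOn.inv₀ (by fun_prop)
          intro t ht
          rw [Set.uIcc_of_le hLpos.le] at ht
          have h1 : (0:ℝ) < 1 + t := by linarith [ht.1]
          exact h1.ne'
        rw [intervalIntegral.integral_eq_sub_of_hasDerivAt hF hint]
        norm_num
      have hneg : ∫ t in (-L)..(0:ℝ), M₀ * (1 + |t|)⁻¹ = ∫ t in (0:ℝ)..L, M₀ * (1 + |t|)⁻¹ := by
        have h := intervalIntegral.integral_comp_neg (a := (0:ℝ)) (b := L)
          (fun t => M₀ * (1 + |t|)⁻¹)
        simpa [abs_neg] using h.symm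
      have hadd : ∫ t in (-L)..L, M₀ * (1 + |t|)⁻¹ =
          (∫ t in (-L)..(0:ℝ), M₀ * (1 + |t|)⁻¹) + ∫ t in (0:ℝ)..L, M₀ * (1 + |t|)⁻¹ :=
        (intervalIntegral.integral_add_adjacent_intervals
          (hφcont.intervalIntegrable _ _) (hφcont.intervalIntegrable _ _)).symm
      refine hbound.trans ?_
      rw [hadd, hneg, hval0]
      have hln : 0 ≤ Real.log (1 + L) := Real.log_nonneg (by linarith)
      have hlog1 : Real.log (1 + L) ≤ 2 * Real.log L := by
        have h1 : (1:ℝ) + L ≤ L ^ 2 := by nlinarith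
        have h2 := Real.log_le_log (by positivity) h1
        rw [Real.log_pow] at h2
        norm_num at h2
        exact h2
      rw [_root_.abs_of_nonneg
        (add_nonneg (mul_nonneg hM₀0 hln) (mul_nonneg hM₀0 hln))]
      have h3 : M₀ * Real.log (1 + L) ≤ M₀ * (2 * Real.log L) :=
        mul_le_mul_of_nonneg_left hlog1 hM₀0
      linarith
    have hlogL : (1 : ℝ) / 2 ≤ Real.log L := by
      have h1 : Real.log 2 ≤ Real.log L := Real.log_le_log (by norm_num) hL2.le
      nlinarith [Real.log_two_gt_d9]
    have hlogeq : Real.log (1 / |x|) = Real.log L := by rw [hLdef]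
    have hk : ‖k‖ ≤ ‖I₀‖ + (‖a L * v L‖ + ‖Tp‖) + (‖a (-L) * v (-L)‖ + ‖Tm‖) := by
      rw [hkdef]
      refine le_trans (norm_add_le _ _) ?_
      refine add_le_add (le_trans (norm_add_le _ _) ?_) ?_
      · refine add_le_add le_rfl ?_
        refine le_trans (norm_sub_le _ _) ?_
        simp [zero_sub]
      · refine le_trans (norm_sub_le _ _) ?_
        simp [sub_zero]
    rw [hlogeq]
    refine le_trans hk ?_
    have key : 4 * M₀ * Real.log L + 2 * M₀ + 2 * M₁ ≤ 100 * Real.log L * (M₀ + M₁) := by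
      nlinarith [hlogL, hM₀0, hM₁0]
    linarith [hI₀, hbL, hbL', hTp, hTm, key]
end

section
/- For ζ ∈ ℝ \ {0} and 0 < |x| < 1/2, the truncated oscillatory integral I(x) = ζ ∫_2^{1/|x|} λ^{-1-iζ} e^{iλx} dλ satisfies |I(x)| ≤ C(1 + |ζ|) for an absolute constant C. In particular it is bounded uniformly in x, in contrast with the case ζ = 0 where ∫_2^{1/|x|} λ^{-1} dλ = log(1/(2|x|)) blows up. -/
/-!
Integrate by parts against the unimodular phase `λ^{-iζ} e^{iλx}`: since
`ζ λ^{-1-iζ} = i (λ^{-iζ})'`, the factor `ζ` is absorbed by the derivative, leaving two boundary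
terms of modulus `1` and the integral of `x λ^{-iζ} e^{iλx}` over an interval of length at most
`1/|x|`.
-/

open Complex MeasureTheory
open scoped Interval

noncomputable def oscillatoryPhase (ζ x t : ℝ) : ℂ := (t : ℂ) ^ (-(I * ζ)) * exp (I * t * x)

lemma norm_oscillatoryPhase (ζ x : ℝ) {t : ℝ} (ht : 0 < t) : ‖oscillatoryPhase ζ x t‖ = 1 := by
  rw [oscillatoryPhase, norm_mul, norm_cpow_eq_rpow_re_of_pos ht, norm_exp]
  simp

lemma hasDerivAt_ofReal_cpow_const_of_pos (r : ℂ) {t : ℝ} (ht : 0 < t) :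
    HasDerivAt (fun y : ℝ => (y : ℂ) ^ r) (r * (t : ℂ) ^ (r - 1)) t :=
  (hasStrictDerivAt_cpow_const (ofReal_mem_slitPlane.2 ht)).hasDerivAt.comp_ofReal

lemma hasDerivAt_exp_I_mul_ofReal_mul (x t : ℝ) :
    HasDerivAt (fun y : ℝ => exp (I * y * x)) (I * x * exp (I * t * x)) t := by
  simpa [mul_comm] using
    ((((hasDerivAt_id (t : ℂ)).const_mul I).mul_const (x : ℂ)).cexp).comp_ofReal

lemma mul_integral_cpow_mul_exp_eq {a b : ℝ} (ha : 0 < a) (hb : 0 < b) (ζ x : ℝ) :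
    (ζ : ℂ) * ∫ t in a..b, (t : ℂ) ^ (-1 - I * ζ) * exp (I * t * x) =
      I * (oscillatoryPhase ζ x b - oscillatoryPhase ζ x a) +
        x * ∫ t in a..b, oscillatoryPhase ζ x t := by
  have hpos : [[a, b]] ⊆ Set.Ioi 0 := fun t ht => lt_min ha hb |>.trans_le ht.1
  have parts := intervalIntegral.integral_mul_deriv_eq_deriv_mul
    (fun t ht => hasDerivAt_ofReal_cpow_const_of_pos (-(I * ζ)) (hpos ht))
    (fun t _ => hasDerivAt_exp_I_mul_ofReal_mul x t)
    (continuousOn_const.mul fun t ht => (continuousAt_ofReal_cpow_const t _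
      (Or.inr (hpos ht).ne')).continuousWithinAt).intervalIntegrable
    (by fun_prop : Continuous fun t : ℝ => I * x * exp (I * t * x)).continuousOn.intervalIntegrable
  have hexponent : -(I * ζ) - 1 = -1 - I * ζ := by ring
  simp only [hexponent, mul_left_comm _ (I * (x : ℂ)), mul_assoc (-(I * (ζ : ℂ))),
    intervalIntegral.integral_const_mul] at parts
  simp only [oscillatoryPhase]
  linear_combination I * parts + (ζ * (∫ t in a..b, (t : ℂ) ^ (-1 - I * ζ) * exp (I * t * x)) -
    x * ∫ t in a..b, (t : ℂ) ^ (-(I * ζ)) * exp (I * t * x)) * I_sq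

lemma norm_mul_integral_cpow_mul_exp_le {a b : ℝ} (ha : 0 < a) (hab : a ≤ b) (ζ x : ℝ) :
    ‖(ζ : ℂ) * ∫ t in a..b, (t : ℂ) ^ (-1 - I * ζ) * exp (I * t * x)‖ ≤ 2 + |x| * (b - a) := by
  have hb : 0 < b := ha.trans_le hab
  have hphase_integral : ‖∫ t in a..b, oscillatoryPhase ζ x t‖ ≤ b - a := by
    simpa [abs_of_nonneg (sub_nonneg.2 hab)] using
      intervalIntegral.norm_integral_le_of_norm_le_const (C := 1) fun t ht =>
        (norm_oscillatoryPhase ζ x ((lt_min ha hb).trans ht.1)).le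
  rw [mul_integral_cpow_mul_exp_eq ha hb]
  calc _ ≤ ‖oscillatoryPhase ζ x b‖ + ‖oscillatoryPhase ζ x a‖ + |x| * (b - a) := by
        refine (norm_add_le _ _).trans (add_le_add ?_ ?_)
        · rw [norm_mul, norm_I, one_mul]
          exact norm_sub_le _ _
        · rw [norm_mul, norm_real, Real.norm_eq_abs]
          gcongr
    _ = 2 + |x| * (b - a) := by
      rw [norm_oscillatoryPhase ζ x hb, norm_oscillatoryPhase ζ x ha]
      norm_num

/-- The truncated oscillatory integral `I(x) = ζ ∫_2^{1/|x|} λ^{-1-iζ} e^{iλx} dλ`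
is bounded by `C(1+|ζ|)` with an absolute constant `C`. -/
theorem truncated_oscillatory_integral_bound :
    ∃ C : ℝ, 0 ≤ C ∧ ∀ ζ : ℝ, ζ ≠ 0 → ∀ x : ℝ, 0 < |x| → |x| < 1 / 2 →
      ‖(ζ : ℂ) * ∫ lam in Set.Ioc (2 : ℝ) (1 / |x|),
          (lam : ℂ) ^ (-1 - Complex.I * ζ) * Complex.exp (Complex.I * lam * x)‖ ≤
        C * (1 + |ζ|) := by
  refine ⟨3, by norm_num, fun ζ _ x hx hx_lt => ?_⟩
  have htwo_le : 2 ≤ 1 / |x| := by rw [le_div_iff₀ hx]; linarith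
  rw [← intervalIntegral.integral_of_le htwo_le]
  calc _ ≤ 2 + |x| * (1 / |x| - 2) := norm_mul_integral_cpow_mul_exp_le two_pos htwo_le ζ x
    _ ≤ 3 := by rw [mul_sub, mul_one_div_cancel hx.ne']; linarith
    _ ≤ 3 * (1 + |ζ|) := by nlinarith [abs_nonneg ζ]
end

section
/- For ζ ∈ ℝ and x ≠ 0, the improper oscillatory integral II(x) = ζ ∫_{1/|x|}^∞ λ^{-1-iζ} e^{iλx} dλ converges and satisfies |II(x)| ≤ C(1 + ζ²) for an absolute constant C, uniformly in x. -/
/-!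
Integrate by parts against the primitive `e^{iλx} / (ix)` of the phase. The boundary term at
`λ = a` has size `a^{Re s} / |x|`, the one at `λ = R` tends to `0`, and the new integrand
`s λ^{s-1} e^{iλx} / (ix)` is absolutely integrable on `(a, ∞)` with integral at most
`|s| a^{Re s} / (|x| |Re s|)`. For `s = -1 - iζ` and `a = 1/|x|` both pieces are `O(1 + |ζ|)`,
and the prefactor `ζ` gives `O(1 + ζ²)`.
-/

open Complex MeasureTheory Filter Set Topology

section

variable {s : ℂ} {a ω : ℝ}

lemma norm_exp_I_mul_ofReal_mul (t ω : ℝ) : ‖exp (I * t * ω)‖ = 1 := by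
  rw [mul_assoc, ← ofReal_mul, norm_exp_I_mul_ofReal]

lemma hasDerivAt_exp_I_mul_ofReal_mul_div (hω : ω ≠ 0) (t : ℝ) :
    HasDerivAt (fun t : ℝ => exp (I * t * ω) / (I * ω)) (exp (I * t * ω)) t := by
  have hIω : I * ω ≠ 0 := mul_ne_zero I_ne_zero (ofReal_ne_zero.mpr hω)
  have hphase : HasDerivAt (fun t : ℝ => I * t * ω) (I * ω) t := by
    simpa using ((hasDerivAt_id (t : ℂ)).comp_ofReal.const_mul I).mul_const (ω : ℂ)
  simpa [mul_div_cancel_right₀ _ hIω] using hphase.cexp.div_const (I * ω)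

lemma norm_cpow_mul_exp_div {t : ℝ} (ht : 0 < t) (s : ℂ) (ω : ℝ) :
    ‖(t : ℂ) ^ s * (exp (I * t * ω) / (I * ω))‖ = t ^ s.re / |ω| := by
  rw [norm_mul, norm_div, norm_cpow_eq_rpow_re_of_pos ht, norm_exp_I_mul_ofReal_mul, norm_mul,
    norm_I, norm_real, Real.norm_eq_abs, one_mul, mul_one_div]

lemma integral_Ioc_cpow_mul_exp_eq (hs : s ≠ 0) (ha : 0 < a) (hω : ω ≠ 0) {R : ℝ} (haR : a ≤ R) :
    ∫ t in Ioc a R, (t : ℂ) ^ s * exp (I * t * ω) =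
      R ^ s * (exp (I * R * ω) / (I * ω)) - a ^ s * (exp (I * a * ω) / (I * ω)) -
        ∫ t in a..R, s * (t : ℂ) ^ (s - 1) * (exp (I * t * ω) / (I * ω)) := by
  have hpos : ∀ t ∈ uIcc a R, 0 < t := fun t ht => ha.trans_le (uIcc_of_le haR ▸ ht).1
  rw [← intervalIntegral.integral_of_le haR]
  refine intervalIntegral.integral_mul_deriv_eq_deriv_mul
    (fun t ht => hasDerivAt_ofReal_cpow_const (hpos t ht).ne' hs)
    (fun t _ => hasDerivAt_exp_I_mul_ofReal_mul_div hω t) ?_ ?_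
  · refine ContinuousOn.intervalIntegrable fun t ht => ?_
    exact ((continuousAt_ofReal_cpow_const _ _ (Or.inr (hpos t ht).ne')).const_mul
      s).continuousWithinAt
  · exact (by fun_prop : Continuous fun t : ℝ => exp (I * t * ω)).intervalIntegrable _ _

lemma norm_mul_cpow_sub_one_mul_exp_div {t : ℝ} (ht : 0 < t) (s : ℂ) (ω : ℝ) :
    ‖s * (t : ℂ) ^ (s - 1) * (exp (I * t * ω) / (I * ω))‖ = ‖s‖ / |ω| * t ^ (s.re - 1) := by
  rw [mul_assoc, norm_mul, norm_cpow_mul_exp_div ht, sub_re, one_re]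
  ring

lemma integrableOn_Ioi_cpow_mul_exp_div (hs : s.re < 0) (ha : 0 < a) (ω : ℝ) :
    IntegrableOn (fun t : ℝ => s * (t : ℂ) ^ (s - 1) * (exp (I * t * ω) / (I * ω))) (Ioi a) := by
  have hcont : ContinuousOn (fun t : ℝ => s * (t : ℂ) ^ (s - 1) * (exp (I * t * ω) / (I * ω)))
      (Ioi a) := fun t ht =>
    (((continuousAt_ofReal_cpow_const _ _ (Or.inr (ha.trans ht).ne')).const_mul s).mul
      (by fun_prop : Continuous fun t : ℝ => exp (I * t * ω) / (I * ω)).continuousAt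
      ).continuousWithinAt
  refine Integrable.mono' ((integrableOn_Ioi_rpow_of_lt (by linarith : s.re - 1 < -1) ha).const_mul
    (‖s‖ / |ω|)) (hcont.aestronglyMeasurable measurableSet_Ioi) ?_
  filter_upwards [self_mem_ae_restrict measurableSet_Ioi] with t ht
  exact (norm_mul_cpow_sub_one_mul_exp_div (ha.trans ht) s ω).le

lemma norm_integral_Ioi_cpow_mul_exp_div_le (hs : s.re < 0) (ha : 0 < a) :
    ‖∫ t in Ioi a, s * (t : ℂ) ^ (s - 1) * (exp (I * t * ω) / (I * ω))‖ ≤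
      ‖s‖ / |ω| * (a ^ s.re / -s.re) := by
  have hlt : s.re - 1 < -1 := by linarith
  calc _ ≤ ∫ t in Ioi a, ‖s‖ / |ω| * t ^ (s.re - 1) := by
        refine norm_integral_le_of_norm_le ((integrableOn_Ioi_rpow_of_lt hlt ha).const_mul _) ?_
        filter_upwards [self_mem_ae_restrict measurableSet_Ioi] with t ht
        exact (norm_mul_cpow_sub_one_mul_exp_div (ha.trans ht) s ω).le
    _ = ‖s‖ / |ω| * (a ^ s.re / -s.re) := by
        rw [integral_const_mul, integral_Ioi_rpow_of_lt hlt ha, sub_add_cancel, neg_div, div_neg]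

lemma tendsto_cpow_mul_exp_div_atTop (hs : s.re < 0) (ω : ℝ) :
    Tendsto (fun R : ℝ => (R : ℂ) ^ s * (exp (I * R * ω) / (I * ω))) atTop (𝓝 0) := by
  have hdecay : Tendsto (fun R : ℝ => R ^ s.re / |ω|) atTop (𝓝 0) := by
    simpa using (tendsto_rpow_neg_atTop (neg_pos.mpr hs)).div_const |ω|
  refine squeeze_zero_norm' ?_ hdecay
  filter_upwards [eventually_gt_atTop 0] with R hR
  rw [norm_cpow_mul_exp_div hR]

theorem exists_tendsto_integral_Ioc_cpow_mul_exp (hs : s.re < 0) (ha : 0 < a) (hω : ω ≠ 0) :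
    ∃ L : ℂ, Tendsto (fun R : ℝ => ∫ t in Ioc a R, (t : ℂ) ^ s * exp (I * t * ω)) atTop (𝓝 L) ∧
      ‖L‖ ≤ a ^ s.re / |ω| * (1 + ‖s‖ / -s.re) := by
  have hs0 : s ≠ 0 := fun h => by simp [h] at hs
  set B := (a : ℂ) ^ s * (exp (I * a * ω) / (I * ω))
  set J := ∫ t in Ioi a, s * (t : ℂ) ^ (s - 1) * (exp (I * t * ω) / (I * ω))
  refine ⟨0 - B - J, ?_, ?_⟩
  · have hJ := intervalIntegral_tendsto_integral_Ioi a
      (integrableOn_Ioi_cpow_mul_exp_div hs ha ω) tendsto_id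
    refine (((tendsto_cpow_mul_exp_div_atTop hs ω).sub_const B).sub hJ).congr' ?_
    filter_upwards [eventually_ge_atTop a] with R hR
    exact (integral_Ioc_cpow_mul_exp_eq hs0 ha hω hR).symm
  · calc ‖0 - B - J‖ ≤ ‖B‖ + ‖J‖ := by rw [zero_sub, ← norm_neg B]; exact norm_sub_le _ _
      _ ≤ a ^ s.re / |ω| + ‖s‖ / |ω| * (a ^ s.re / -s.re) := by
        rw [norm_cpow_mul_exp_div ha]
        gcongr
        exact norm_integral_Ioi_cpow_mul_exp_div_le hs ha
      _ = a ^ s.re / |ω| * (1 + ‖s‖ / -s.re) := by ring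

end

/-- The improper oscillatory integral `II(x) = ζ ∫_{1/|x|}^∞ λ^{-1-iζ} e^{iλx} dλ`
converges (as a limit of truncated integrals) and is bounded by `C(1+ζ²)`,
uniformly in `x ≠ 0`. -/
theorem improper_oscillatory_integral_bound :
    ∃ C : ℝ, 0 ≤ C ∧ ∀ ζ : ℝ, ∀ x : ℝ, x ≠ 0 →
      ∃ L : ℂ,
        Tendsto (fun R : ℝ =>
            (ζ : ℂ) * ∫ lam in Set.Ioc (1 / |x|) R,
              (lam : ℂ) ^ (-1 - Complex.I * ζ) * Complex.exp (Complex.I * lam * x))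
          atTop (nhds L) ∧
        ‖L‖ ≤ C * (1 + ζ ^ 2) := by
  refine ⟨2, zero_le_two, fun ζ x hx => ?_⟩
  have hre : (-1 - I * ζ).re = -1 := by simp
  obtain ⟨L, hL, hL_le⟩ := exists_tendsto_integral_Ioc_cpow_mul_exp (s := -1 - I * ζ)
    (by rw [hre]; norm_num) (one_div_pos.mpr (abs_pos.mpr hx)) hx
  -- at `a = 1 / |x|`, `s.re = -1` the general bound collapses to `1 + ‖s‖`
  rw [hre, one_div, Real.rpow_neg_one, inv_inv, div_self (abs_ne_zero.mpr hx), neg_neg, div_one,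
    one_mul] at hL_le
  have hs : ‖-1 - I * ζ‖ ≤ 1 + |ζ| := (norm_sub_le _ _).trans (by simp)
  refine ⟨ζ * L, hL.const_mul _, ?_⟩
  calc ‖(ζ : ℂ) * L‖ = |ζ| * ‖L‖ := by rw [norm_mul, norm_real, Real.norm_eq_abs]
    _ ≤ |ζ| * (2 + |ζ|) := by gcongr; linarith
    _ ≤ 2 * (1 + ζ ^ 2) := by nlinarith [sq_abs ζ, sq_nonneg (|ζ| - 1)]
end

section
/- Fix an integer n ≥ 2 and set ρ = (n-1)/2. Define for λ ∈ ℝ and r ≥ 0 the function φ_λ(r) = (Γ(n/2)/(√π Γ((n-1)/2))) ∫_0^π (sin θ)^{n-2} (cosh r - sinh r cos θ)^{-ρ - iλ} dθ. Then for every real λ and every r ≥ 0, |φ_λ(r)| ≤ φ_0(r), and there exists C > 0 such that φ_0(r) ≤ C (1 + r) e^{-ρ r} for all r ≥ 0. -/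
open Complex MeasureTheory Real

/-! The base `cosh r - sinh r cos θ = e^r sin²(θ/2) + e^{-r} cos²(θ/2)` is positive, so the modulus
of the integrand is the integrand of `φ_0`, whatever `λ`; the first claim is then the triangle
inequality for integrals. For the second, split `(0, π)` at `t = e^{-r}`. On `(0, t)` the base is
at least `e^{-r}`, so the integrand is at most `t^{n-2} e^{ρ r}` and this piece contributes at most
`t^{n-1} e^{ρ r} = e^{-ρ r}`. On `(t, π)` the base is at least `e^r sin²(θ/2)`; with
`sin θ ≤ 2 sin(θ/2)` and Jordan's inequality `sin(θ/2) ≥ θ/π` the integrand is at most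
`2^{n-2} π e^{-ρ r} / θ`, and this piece contributes `2^{n-2} π e^{-ρ r} (log π + r)`. -/

namespace SphericalFunction

open Set

lemma cosh_sub_sinh_mul_cos_eq (r θ : ℝ) :
    Real.cosh r - Real.sinh r * Real.cos θ =
      Real.exp r * Real.sin (θ / 2) ^ 2 + Real.exp (-r) * Real.cos (θ / 2) ^ 2 := by
  have hcos : Real.cos θ = 2 * Real.cos (θ / 2) ^ 2 - 1 := by
    rw [← Real.cos_two_mul]; ring_nf
  rw [hcos, Real.cosh_eq, Real.sinh_eq]
  linear_combination -(Real.exp r) * Real.sin_sq_add_cos_sq (θ / 2)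

lemma cosh_sub_sinh_mul_cos_pos (r θ : ℝ) : 0 < Real.cosh r - Real.sinh r * Real.cos θ := by
  have : Real.sinh r * Real.cos θ < Real.cosh r :=
    calc Real.sinh r * Real.cos θ ≤ |Real.sinh r| := by
          refine (le_abs_self _).trans ?_
          rw [abs_mul]
          exact mul_le_of_le_one_right (abs_nonneg _) (Real.abs_cos_le_one θ)
      _ = Real.sinh |r| := Real.abs_sinh r
      _ < Real.cosh |r| := Real.sinh_lt_cosh _
      _ = Real.cosh r := Real.cosh_abs r
  linarith

lemma exp_neg_le_cosh_sub_sinh_mul_cos {r : ℝ} (hr : 0 ≤ r) (θ : ℝ) :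
    Real.exp (-r) ≤ Real.cosh r - Real.sinh r * Real.cos θ := by
  have hexp : Real.exp (-r) ≤ Real.exp r := Real.exp_le_exp.2 (by linarith)
  rw [cosh_sub_sinh_mul_cos_eq, Real.cos_sq' (θ / 2)]
  nlinarith [mul_nonneg (sub_nonneg.2 hexp) (sq_nonneg (Real.sin (θ / 2)))]

lemma exp_mul_sin_half_sq_le (r θ : ℝ) :
    Real.exp r * Real.sin (θ / 2) ^ 2 ≤ Real.cosh r - Real.sinh r * Real.cos θ := by
  rw [cosh_sub_sinh_mul_cos_eq]
  have : 0 ≤ Real.exp (-r) * Real.cos (θ / 2) ^ 2 := by positivity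
  linarith

variable (n : ℕ) (ρ : ℝ)

noncomputable def integrand (lam r θ : ℝ) : ℂ :=
  ((Real.sin θ ^ (n - 2) : ℝ) : ℂ) *
    ((Real.cosh r - Real.sinh r * Real.cos θ : ℝ) : ℂ) ^ (-(ρ : ℂ) - Complex.I * lam)

noncomputable def integrandNorm (r θ : ℝ) : ℝ :=
  Real.sin θ ^ (n - 2) * (Real.cosh r - Real.sinh r * Real.cos θ) ^ (-ρ)

lemma continuous_integrandNorm (r : ℝ) : Continuous (integrandNorm n ρ r) :=
  (Real.continuous_sin.pow _).mul <| (by fun_prop : Continuous fun θ => _).rpow_const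
    fun θ => Or.inl (cosh_sub_sinh_mul_cos_pos r θ).ne'

lemma integrandNorm_nonneg (r : ℝ) {θ : ℝ} (hθ : 0 ≤ Real.sin θ) : 0 ≤ integrandNorm n ρ r θ :=
  mul_nonneg (pow_nonneg hθ _) (Real.rpow_nonneg (cosh_sub_sinh_mul_cos_pos r θ).le _)

lemma norm_integrand (lam r : ℝ) {θ : ℝ} (hθ : 0 ≤ Real.sin θ) :
    ‖integrand n ρ lam r θ‖ = integrandNorm n ρ r θ := by
  rw [integrand, norm_mul, Complex.norm_cpow_eq_rpow_re_of_pos (cosh_sub_sinh_mul_cos_pos r θ),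
    Complex.norm_real, Real.norm_of_nonneg (pow_nonneg hθ _)]
  simp [integrandNorm]

lemma integrand_zero (r θ : ℝ) : integrand n ρ 0 r θ = integrandNorm n ρ r θ := by
  rw [integrand, integrandNorm, Complex.ofReal_mul,
    Complex.ofReal_cpow (cosh_sub_sinh_mul_cos_pos r θ).le]
  simp

lemma setIntegral_integrandNorm_nonneg (r : ℝ) : 0 ≤ ∫ θ in Ioo 0 π, integrandNorm n ρ r θ :=
  setIntegral_nonneg measurableSet_Ioo fun _ hθ =>
    integrandNorm_nonneg n ρ r (Real.sin_nonneg_of_nonneg_of_le_pi hθ.1.le hθ.2.le)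

lemma norm_setIntegral_integrand_zero (r : ℝ) :
    ‖∫ θ in Ioo 0 π, integrand n ρ 0 r θ‖ = ∫ θ in Ioo 0 π, integrandNorm n ρ r θ := by
  simp_rw [integrand_zero]
  rw [integral_complex_ofReal, Complex.norm_real]
  exact Real.norm_of_nonneg (setIntegral_integrandNorm_nonneg n ρ r)

lemma norm_setIntegral_integrand_le (lam r : ℝ) :
    ‖∫ θ in Ioo 0 π, integrand n ρ lam r θ‖ ≤ ‖∫ θ in Ioo 0 π, integrand n ρ 0 r θ‖ := by
  rw [norm_setIntegral_integrand_zero]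
  refine (norm_integral_le_integral_norm _).trans_eq (setIntegral_congr_fun measurableSet_Ioo ?_)
  exact fun θ hθ => norm_integrand n ρ lam r (Real.sin_nonneg_of_nonneg_of_le_pi hθ.1.le hθ.2.le)

variable {n ρ}

lemma rho_nonneg (hn : 2 ≤ n) (hρ : ρ = ((n : ℝ) - 1) / 2) : 0 ≤ ρ := by
  have : (2 : ℝ) ≤ n := by exact_mod_cast hn
  rw [hρ]
  linarith

lemma integrandNorm_le_pow_mul_exp (hρ : 0 ≤ ρ) {r : ℝ} (hr : 0 ≤ r) {θ : ℝ}
    (hθ : θ ∈ Icc 0 π) :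
    integrandNorm n ρ r θ ≤ θ ^ (n - 2) * Real.exp (ρ * r) := by
  have hsin := Real.sin_nonneg_of_nonneg_of_le_pi hθ.1 hθ.2
  have hbase : (Real.cosh r - Real.sinh r * Real.cos θ) ^ (-ρ) ≤ Real.exp (-r) ^ (-ρ) :=
    Real.rpow_le_rpow_of_nonpos (Real.exp_pos _) (exp_neg_le_cosh_sub_sinh_mul_cos hr θ)
      (neg_nonpos.2 hρ)
  rw [← Real.exp_mul, neg_mul_neg, mul_comm r] at hbase
  exact mul_le_mul (pow_le_pow_left₀ hsin (Real.sin_le hθ.1) _) hbase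
    (Real.rpow_nonneg (cosh_sub_sinh_mul_cos_pos r θ).le _) (pow_nonneg hθ.1 _)

lemma rpow_neg_le_exp_mul_inv_sin_half_pow (hn : 2 ≤ n) (hρ : ρ = ((n : ℝ) - 1) / 2)
    (r : ℝ) {θ : ℝ} (hθ : 0 < Real.sin (θ / 2)) :
    (Real.cosh r - Real.sinh r * Real.cos θ) ^ (-ρ) ≤
      Real.exp (-ρ * r) * (Real.sin (θ / 2) ^ (n - 1))⁻¹ := by
  refine (Real.rpow_le_rpow_of_nonpos (by positivity) (exp_mul_sin_half_sq_le r θ)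
    (neg_nonpos.2 (rho_nonneg hn hρ))).trans_eq ?_
  have htwo : 2 * ρ = ((n - 1 : ℕ) : ℝ) := by
    rw [hρ, Nat.cast_sub (by omega)]; push_cast; ring
  rw [Real.mul_rpow (Real.exp_pos r).le (by positivity), ← Real.exp_mul,
    Real.rpow_neg (sq_nonneg _), ← Real.rpow_natCast (Real.sin (θ / 2)) 2,
    ← Real.rpow_mul hθ.le, Nat.cast_ofNat, htwo, Real.rpow_natCast]
  ring_nf

lemma integrandNorm_le_mul_inv (hn : 2 ≤ n) (hρ : ρ = ((n : ℝ) - 1) / 2) (r : ℝ) {θ : ℝ}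
    (hθ : θ ∈ Ioc 0 π) :
    integrandNorm n ρ r θ ≤ 2 ^ (n - 2) * π * Real.exp (-ρ * r) * θ⁻¹ := by
  set s := Real.sin (θ / 2)
  have hjordan : θ / π ≤ s := by
    have := Real.mul_le_sin (x := θ / 2) (by linarith [hθ.1]) (by linarith [hθ.2])
    field_simp at this ⊢
    linarith
  have hs : 0 < s := (div_pos hθ.1 Real.pi_pos).trans_le hjordan
  have hsin : Real.sin θ ≤ 2 * s := by
    have : Real.sin θ = 2 * s * Real.cos (θ / 2) := by rw [← Real.sin_two_mul]; ring_nf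
    rw [this]
    exact mul_le_of_le_one_right (by positivity) (Real.cos_le_one _)
  have hsin0 := Real.sin_nonneg_of_nonneg_of_le_pi hθ.1.le hθ.2
  calc integrandNorm n ρ r θ
      ≤ (2 * s) ^ (n - 2) * (Real.exp (-ρ * r) * (s ^ (n - 1))⁻¹) :=
        mul_le_mul (pow_le_pow_left₀ hsin0 hsin _)
          (rpow_neg_le_exp_mul_inv_sin_half_pow hn hρ r hs)
          (Real.rpow_nonneg (cosh_sub_sinh_mul_cos_pos r θ).le _) (by positivity)
    _ = 2 ^ (n - 2) * Real.exp (-ρ * r) * s⁻¹ := by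
        obtain ⟨k, rfl⟩ := Nat.exists_eq_add_of_le hn
        rw [show 2 + k - 1 = k + 1 by omega, show 2 + k - 2 = k by omega]
        field_simp
        ring
    _ ≤ 2 ^ (n - 2) * Real.exp (-ρ * r) * (θ / π)⁻¹ := by
        gcongr
        exact div_pos hθ.1 Real.pi_pos
    _ = 2 ^ (n - 2) * π * Real.exp (-ρ * r) * θ⁻¹ := by
        rw [inv_div, div_eq_mul_inv]; ring

lemma exp_neg_le_pi {r : ℝ} (hr : 0 ≤ r) : Real.exp (-r) ≤ π :=
  (Real.exp_le_one_iff.2 (by linarith)).trans (by linarith [Real.pi_gt_three])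

lemma integral_integrandNorm_zero_exp_neg_le (hn : 2 ≤ n) (hρ : ρ = ((n : ℝ) - 1) / 2)
    {r : ℝ} (hr : 0 ≤ r) :
    ∫ θ in 0..Real.exp (-r), integrandNorm n ρ r θ ≤ Real.exp (-ρ * r) := by
  set t := Real.exp (-r) with ht
  calc ∫ θ in 0..t, integrandNorm n ρ r θ
      ≤ ∫ _ in 0..t, t ^ (n - 2) * Real.exp (ρ * r) :=
        intervalIntegral.integral_mono_on (Real.exp_pos _).le
          ((continuous_integrandNorm n ρ r).intervalIntegrable _ _) intervalIntegrable_const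
          fun θ hθ => (integrandNorm_le_pow_mul_exp (rho_nonneg hn hρ) hr
            ⟨hθ.1, hθ.2.trans (exp_neg_le_pi hr)⟩).trans (by gcongr; exacts [hθ.1, hθ.2])
    _ = Real.exp (-ρ * r) := by
        rw [intervalIntegral.integral_const, sub_zero, smul_eq_mul, ← mul_assoc,
          ← pow_succ', show n - 2 + 1 = n - 1 by omega, ht, ← Real.exp_nat_mul,
          ← Real.exp_add, Nat.cast_sub (by omega), hρ]
        congr 1
        push_cast
        ring

lemma integral_integrandNorm_exp_neg_pi_le (hn : 2 ≤ n) (hρ : ρ = ((n : ℝ) - 1) / 2)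
    {r : ℝ} (hr : 0 ≤ r) :
    ∫ θ in Real.exp (-r)..π, integrandNorm n ρ r θ ≤
      2 ^ (n - 2) * π * Real.exp (-ρ * r) * (Real.log π + r) := by
  have ht0 := Real.exp_pos (-r)
  calc ∫ θ in Real.exp (-r)..π, integrandNorm n ρ r θ
      ≤ ∫ θ in Real.exp (-r)..π, 2 ^ (n - 2) * π * Real.exp (-ρ * r) * θ⁻¹ :=
        intervalIntegral.integral_mono_on (exp_neg_le_pi hr)
          ((continuous_integrandNorm n ρ r).intervalIntegrable _ _)
          ((intervalIntegrable_inv_iff.2 (Or.inr (notMem_uIcc_of_lt ht0 Real.pi_pos))).const_mul _)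
          fun θ hθ => integrandNorm_le_mul_inv hn hρ r ⟨ht0.trans_le hθ.1, hθ.2⟩
    _ = 2 ^ (n - 2) * π * Real.exp (-ρ * r) * (Real.log π + r) := by
        rw [intervalIntegral.integral_const_mul, integral_inv_of_pos ht0 Real.pi_pos,
          Real.log_div Real.pi_pos.ne' ht0.ne', Real.log_exp, sub_neg_eq_add]

lemma setIntegral_integrandNorm_le (hn : 2 ≤ n) (hρ : ρ = ((n : ℝ) - 1) / 2) {r : ℝ}
    (hr : 0 ≤ r) :
    ∫ θ in Ioo 0 π, integrandNorm n ρ r θ ≤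
      (1 + 3 * 2 ^ (n - 2) * π) * (1 + r) * Real.exp (-ρ * r) := by
  have hint := (continuous_integrandNorm n ρ r).intervalIntegrable (μ := volume)
  rw [← integral_Ioc_eq_integral_Ioo, ← intervalIntegral.integral_of_le Real.pi_pos.le,
    ← intervalIntegral.integral_add_adjacent_intervals (b := Real.exp (-r)) (hint _ _) (hint _ _)]
  have hnear := integral_integrandNorm_zero_exp_neg_le hn hρ hr
  have hfar := integral_integrandNorm_exp_neg_pi_le hn hρ hr
  have hlogπ : Real.log π ≤ 3 :=
    (Real.log_le_sub_one_of_pos Real.pi_pos).trans (by linarith [Real.pi_le_four])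
  have hE := Real.exp_pos (-ρ * r)
  have hK : 0 ≤ 2 ^ (n - 2) * π * Real.exp (-ρ * r) := by positivity
  nlinarith [mul_le_mul_of_nonneg_left (by linarith : Real.log π + r ≤ 3 * (1 + r)) hK,
    mul_nonneg hE.le hr]

end SphericalFunction

open SphericalFunction

/-- Basic estimates for the spherical functions `φ_λ` on the real hyperbolic space `H^n`,
via their integral representation:
`|φ_λ(r)| ≤ φ_0(r)` and `φ_0(r) ≲ (1+r) e^{-ρ r}` with `ρ = (n-1)/2`. -/
theorem spherical_function_basic_estimates (n : ℕ) (hn : 2 ≤ n)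
    (ρ : ℝ) (hρ : ρ = ((n : ℝ) - 1) / 2)
    (φ : ℝ → ℝ → ℂ)
    (hφ : ∀ lam r : ℝ, φ lam r =
      ((Real.Gamma ((n : ℝ) / 2) / (Real.sqrt π * Real.Gamma (((n : ℝ) - 1) / 2)) : ℝ) : ℂ) *
        ∫ θ in Set.Ioo (0 : ℝ) π,
          ((Real.sin θ ^ (n - 2) : ℝ) : ℂ) *
            (((Real.cosh r - Real.sinh r * Real.cos θ : ℝ)) : ℂ) ^
              (-(ρ : ℂ) - Complex.I * lam)) :
    (∀ lam r : ℝ, 0 ≤ r → ‖φ lam r‖ ≤ ‖φ 0 r‖) ∧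
    ∃ C : ℝ, 0 < C ∧ ∀ r : ℝ, 0 ≤ r → ‖φ 0 r‖ ≤ C * (1 + r) * Real.exp (-ρ * r) := by
  set c := Real.Gamma ((n : ℝ) / 2) / (Real.sqrt π * Real.Gamma (((n : ℝ) - 1) / 2))
  have hn' : (2 : ℝ) ≤ n := by exact_mod_cast hn
  have hc : 0 < c := div_pos (Real.Gamma_pos_of_pos (by linarith))
    (mul_pos (Real.sqrt_pos.2 Real.pi_pos) (Real.Gamma_pos_of_pos (by linarith)))
  have hnorm : ∀ lam r, ‖φ lam r‖ = c * ‖∫ θ in Set.Ioo 0 π, integrand n ρ lam r θ‖ :=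
    fun lam r => by rw [hφ, norm_mul, Complex.norm_real, Real.norm_of_nonneg hc.le]; rfl
  refine ⟨fun lam r _ => ?_, c * (1 + 3 * 2 ^ (n - 2) * π), by positivity, fun r hr => ?_⟩
  · rw [hnorm, hnorm]
    exact mul_le_mul_of_nonneg_left (norm_setIntegral_integrand_le n ρ lam r) hc.le
  · rw [hnorm, norm_setIntegral_integrand_zero, mul_assoc, mul_assoc, mul_assoc]
    exact mul_le_mul_of_nonneg_left
      ((setIntegral_integrandNorm_le hn hρ hr).trans_eq (by ring)) hc.le
end

section
/- Let n ≥ 4 and γ > 1. Define γ_1 = 1 + 3/n. Suppose 1 < γ ≤ γ_1. Then there exist exponents p, q, p̃, q̃ with (1/p, 1/q) and (1/p̃, 1/q̃) in the admissible set T_n = {(1/p,1/q) ∈ (0,1/2] × (0,1/2) : 2/p + (n-1)/q ≥ (n-1)/2}, such that: (i) p > p̃' γ, (ii) 0 < 1/q̃' ≤ γ/q < 1, and (iii) (n-1)/2 - ((n+1)/2)(1/q + 1/q̃) ≤ n(1/q̃' - γ/q), where p̃' and q̃' denote Hölder conjugates. -/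
/-!
Take `p̃ = 2` and make (ii) an equality, `1/q̃' = γ/q`. Then (iii) reduces to
`(n+1)(γ-1)/q ≤ 2` and the admissibility of `(p̃, q̃)` to `(n-1)(γ/q - 1/2) ≤ 1`; with
`γ/q = (γ+1)/4`, halfway between `1/2` and `γ/2`, both follow from `n(γ-1) ≤ 3` and `n ≥ 3`.
Finally `1/p = 3/(8γ)` lies below the bound `1/(2γ)` forced by (i) and still makes `(p, q)`
admissible, again because `(n-1)(γ-1) ≤ 3`.
-/

/-- `(1/p, 1/q)` lies in the admissible triangle `T_n`. -/
def IsAdmissible (n p q : ℝ) : Prop :=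
  0 < 1 / p ∧ 1 / p ≤ 1 / 2 ∧ 0 < 1 / q ∧ 1 / q < 1 / 2 ∧ (n - 1) / 2 ≤ 2 / p + (n - 1) / q

section

variable {n γ : ℝ}

lemma mul_sub_one_le_three (hn : 0 < n) (hγ : γ ≤ 1 + 3 / n) : n * (γ - 1) ≤ 3 := by
  rw [mul_comm, ← le_div_iff₀ hn]
  linarith

lemma isAdmissible_eight_mul_div_three (hγ : 1 < γ) (h : (n - 1) * (γ - 1) ≤ 3) :
    IsAdmissible n (8 * γ / 3) (4 * γ / (γ + 1)) := by
  have hγ0 : 0 < γ := by linarith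
  refine ⟨by positivity, ?_, by positivity, ?_, ?_⟩
  · rw [one_div_div, div_le_div_iff₀ (by positivity) two_pos]
    linarith
  · rw [one_div_div, div_lt_div_iff₀ (by positivity) two_pos]
    linarith
  · have key : 2 / (8 * γ / 3) + (n - 1) / (4 * γ / (γ + 1)) =
        (n - 1) / 2 + (3 - (n - 1) * (γ - 1)) / (4 * γ) := by
      field_simp
      ring
    rw [key, le_add_iff_nonneg_right]
    exact div_nonneg (by linarith) (by positivity)

lemma isAdmissible_two_four_div (hγ : 1 < γ) (hγ3 : γ < 3) (h : (n - 1) * (γ - 1) ≤ 4) :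
    IsAdmissible n 2 (4 / (3 - γ)) := by
  refine ⟨by norm_num, by norm_num, by simp only [one_div_div]; linarith, ?_, ?_⟩
  · rw [one_div_div]
    linarith
  · rw [div_div_eq_mul_div]
    linarith

lemma div_four_mul_self_div_add_one (hγ : γ ≠ 0) : γ / (4 * γ / (γ + 1)) = (γ + 1) / 4 := by
  field_simp

lemma one_sub_one_div_four_div_three_sub : 1 - 1 / (4 / (3 - γ)) = (γ + 1) / 4 := by
  rw [one_div_div]
  ring

lemma caseA_scaling_condition (hγ : 1 < γ) (h : (n + 1) * (γ - 1) ≤ 4) :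
    (n - 1) / 2 - (n + 1) / 2 * (1 / (4 * γ / (γ + 1)) + 1 / (4 / (3 - γ))) ≤
      n * ((1 - 1 / (4 / (3 - γ))) - γ / (4 * γ / (γ + 1))) := by
  have hγ0 : 0 < γ := by linarith
  have hsum : 1 / (4 * γ / (γ + 1)) + 1 / (4 / (3 - γ)) = 1 - (γ - 1) * (γ + 1) / (4 * γ) := by
    simp only [one_div_div]
    field_simp
    ring
  have hfrac : (γ - 1) * (γ + 1) / (4 * γ) ≤ (γ - 1) / 2 := by
    rw [div_le_div_iff₀ (by positivity) two_pos]
    nlinarith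
  have hfrac0 : 0 ≤ (γ - 1) * (γ + 1) / (4 * γ) := div_nonneg (by nlinarith) (by positivity)
  rw [hsum, one_sub_one_div_four_div_three_sub, div_four_mul_self_div_add_one hγ0.ne', sub_self,
    mul_zero]
  rcases le_total 0 (n + 1) with hn | hn
  · nlinarith [mul_le_mul_of_nonneg_left hfrac hn]
  · nlinarith [mul_nonpos_of_nonpos_of_nonneg hn hfrac0]

end

/-- Case (A) of the local well-posedness argument: for `n ≥ 4` and
`1 < γ ≤ 1 + 3/n`, there exist admissible Strichartz exponents `(p,q)` and
`(p̃,q̃)` (with `(1/p,1/q), (1/p̃,1/q̃)` in the admissible triangle `T_n`)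
satisfying the compatibility conditions (i)–(iii) of the fixed point scheme;
here `p̃' = p̃/(p̃-1)` and `q̃' = q̃/(q̃-1)` denote Hölder conjugates. -/
theorem admissible_exponents_caseA (n : ℕ) (hn : 4 ≤ n) (γ : ℝ)
    (hγ1 : 1 < γ) (hγ2 : γ ≤ 1 + 3 / (n : ℝ)) :
    ∃ p q tp tq : ℝ,
      -- (p, q) admissible
      (0 < 1 / p ∧ 1 / p ≤ 1 / 2 ∧ 0 < 1 / q ∧ 1 / q < 1 / 2 ∧
        ((n : ℝ) - 1) / 2 ≤ 2 / p + ((n : ℝ) - 1) / q) ∧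
      -- (p̃, q̃) admissible
      (0 < 1 / tp ∧ 1 / tp ≤ 1 / 2 ∧ 0 < 1 / tq ∧ 1 / tq < 1 / 2 ∧
        ((n : ℝ) - 1) / 2 ≤ 2 / tp + ((n : ℝ) - 1) / tq) ∧
      -- (i)  p > p̃' γ
      (tp / (tp - 1)) * γ < p ∧
      -- (ii) 0 < 1/q̃' ≤ γ/q < 1
      (0 < 1 - 1 / tq ∧ 1 - 1 / tq ≤ γ / q ∧ γ / q < 1) ∧
      -- (iii) (n-1)/2 - ((n+1)/2)(1/q + 1/q̃) ≤ n(1/q̃' - γ/q)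
      ((n : ℝ) - 1) / 2 - (((n : ℝ) + 1) / 2) * (1 / q + 1 / tq) ≤
        (n : ℝ) * ((1 - 1 / tq) - γ / q) := by
  have hn' : (4 : ℝ) ≤ n := by exact_mod_cast hn
  have hnγ := mul_sub_one_le_three (by linarith) hγ2
  have hγ3 : γ < 3 := by nlinarith
  refine ⟨8 * γ / 3, 4 * γ / (γ + 1), 2, 4 / (3 - γ),
    isAdmissible_eight_mul_div_three hγ1 (by nlinarith),
    isAdmissible_two_four_div hγ1 hγ3 (by nlinarith), by norm_num; linarith, ?_,
    caseA_scaling_condition hγ1 (by nlinarith)⟩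
  rw [one_sub_one_div_four_div_three_sub, div_four_mul_self_div_add_one (by positivity)]
  exact ⟨by positivity, le_rfl, by linarith⟩
end
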